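/- arXiv:1312.7498 — 9 statements merged into one kernel-verified Lean document; each statement's English description precedes it below -/
import Mathlib

section
/- Let c ∈ (0,1) and let {w_n}_{n≥1} be a sequence in the open unit disk 𝔻 such that (1 - |w_n|)/(1 - |w_{n-1}|) ≤ c for all n ≥ 2. Then for every index k, the infinite product ∏_{j : j ≠ k} d(w_k, w_j) is at least (∏_{j=1}^∞ (1 - c^j)/(1 + c^j))². -/
/-! The factor of index `n` at distance `m ≥ 1` from `k` is at least `(1 - c^m)/(1 + c^m)`:
iterating the ratio condition gives `1 - |w_j| ≤ c^(j-i) (1 - |w_i|)` for `i < j`, and `d(z, w)` is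
at least the pseudohyperbolic distance `(|z| - |w|)/(1 - |z||w|)` of the moduli. Every distance `m`
occurs at most twice, once on each side of `k`, and all factors `(1 - c^m)/(1 + c^m)` lie in
`[0, 1]`, so the product is at least the square of `∏ (1 - c^j)/(1 + c^j)`. -/

open Complex Filter Metric

/-- The pseudohyperbolic distance `d(z,w) = |z - w| / |1 - conj z * w|` on the unit disk. -/
noncomputable def pd (z w : ℂ) : ℝ :=
  ‖z - w‖ / ‖1 - (starRingEnd ℂ) z * w‖

lemma pd_comm (z w : ℂ) : pd z w = pd w z := by
  rw [pd, pd, norm_sub_rev, ← Complex.norm_conj (1 - (starRingEnd ℂ) w * z)]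
  simp [mul_comm]

lemma sq_norm_one_sub_conj_mul_sub_sq_norm_sub (z w : ℂ) :
    ‖1 - (starRingEnd ℂ) z * w‖ ^ 2 - ‖z - w‖ ^ 2 = (1 - ‖z‖ ^ 2) * (1 - ‖w‖ ^ 2) := by
  simp only [Complex.sq_norm, Complex.normSq_apply, sub_re, sub_im, mul_re, mul_im, one_re,
    one_im, conj_re, conj_im]
  ring

lemma div_one_sub_norm_mul_le_pd (z w : ℂ) (hz : ‖z‖ < 1) (hw : ‖w‖ < 1) :
    (‖z‖ - ‖w‖) / (1 - ‖z‖ * ‖w‖) ≤ pd z w := by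
  have hrs : ‖z‖ * ‖w‖ < 1 := mul_lt_one_of_nonneg_of_lt_one_left (norm_nonneg z) hz hw.le
  have hden : 1 - ‖z‖ * ‖w‖ ≤ ‖1 - (starRingEnd ℂ) z * w‖ := by
    simpa using norm_sub_norm_le (1 : ℂ) ((starRingEnd ℂ) z * w)
  have hident := sq_norm_one_sub_conj_mul_sub_sq_norm_sub z w
  rw [pd, div_le_div_iff₀ (by linarith) (by linarith)]
  -- Squared, this follows from `|1 - z̄w|² - |z - w|² = (1 - |z|²)(1 - |w|²)` and
  -- `|1 - z̄w| ≥ 1 - |z||w|`.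
  refine (le_abs_self _).trans (abs_le_of_sq_le_sq ?_ (by positivity))
  have h1 : 0 ≤ (1 - ‖z‖ ^ 2) * (1 - ‖w‖ ^ 2) :=
    mul_nonneg (by nlinarith [norm_nonneg z]) (by nlinarith [norm_nonneg w])
  nlinarith [mul_le_mul_of_nonneg_left (pow_le_pow_left₀ (by linarith) hden 2) h1]

lemma one_sub_div_one_add_le_of_one_sub_le_mul {x y t : ℝ} (hx : 0 ≤ x) (hx1 : x < 1)
    (hy1 : y < 1) (ht0 : 0 < t) (ht1 : t < 1) (hxy : 1 - y ≤ t * (1 - x)) :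
    (1 - t) / (1 + t) ≤ (y - x) / (1 - y * x) := by
  have hyx : x < y := by nlinarith
  rw [div_le_div_iff₀ (by linarith) (by nlinarith)]
  nlinarith [mul_nonneg (mul_nonneg (sub_nonneg.2 hx1.le) (sub_nonneg.2 hy1.le))
    (sub_nonneg.2 ht1.le)]

lemma le_pow_mul_of_div_le {u : ℕ → ℝ} {c : ℝ} (hc : 0 ≤ c) (hu : ∀ n, 0 < u n)
    (h : ∀ n, u (n + 1) / u n ≤ c) (i m : ℕ) : u (i + m) ≤ c ^ m * u i :=
  le_geom (u := fun m => u (i + m)) hc m fun _ _ => (div_le_iff₀ (hu _)).mp (h _)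

lemma multipliable_one_sub_pow_div_one_add_pow {c : ℝ} (hc0 : 0 ≤ c) (hc1 : c < 1) :
    Multipliable fun j : ℕ => (1 - c ^ (j + 1)) / (1 + c ^ (j + 1)) := by
  have hsum : Summable fun j : ℕ => -(2 * c ^ (j + 1) / (1 + c ^ (j + 1))) := by
    refine (Summable.of_nonneg_of_le (fun j => by positivity) (fun j => ?_)
      ((summable_geometric_of_lt_one hc0 hc1).mul_left (2 * c))).neg
    calc 2 * c ^ (j + 1) / (1 + c ^ (j + 1)) ≤ 2 * c ^ (j + 1) :=
          div_le_self (by positivity) (le_add_of_nonneg_right (by positivity))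
      _ = 2 * c * c ^ j := by ring
  refine (Real.multipliable_one_add_of_summable hsum).congr fun j => ?_
  field_simp
  ring

lemma HasProd.le_prod_of_le_one {β : Type*} {g : β → ℝ} {p : ℝ} (hg : HasProd g p)
    (hg0 : ∀ b, 0 ≤ g b) (hg1 : ∀ b, g b ≤ 1) (s : Finset β) : p ≤ ∏ b ∈ s, g b :=
  le_of_tendsto hg <| (eventually_ge_atTop s).mono fun _ hst =>
    Finset.prod_le_prod_of_subset_of_le_one hst (fun b _ => hg0 b) fun b _ _ => hg1 b

/-- Also true when `f` is not multipliable, since then `∏' f = 1`. -/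
lemma HasProd.le_tprod_of_injective {α β : Type*} {f : α → ℝ} {g : β → ℝ} {p : ℝ}
    (hg : HasProd g p) (hg0 : ∀ b, 0 ≤ g b) (hg1 : ∀ b, g b ≤ 1) {e : α → β}
    (he : Function.Injective e) (hfg : ∀ a, g (e a) ≤ f a) : p ≤ ∏' a, f a := by
  by_cases hf : Multipliable f
  · refine ge_of_tendsto' hf.hasProd fun s => ?_
    calc p ≤ ∏ b ∈ s.map ⟨e, he⟩, g b := hg.le_prod_of_le_one hg0 hg1 _
      _ = ∏ a ∈ s, g (e a) := Finset.prod_map _ _ _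
      _ ≤ ∏ a ∈ s, f a := Finset.prod_le_prod (fun a _ => hg0 _) fun a _ => hfg a
  · rw [tprod_eq_one_of_not_multipliable hf]
    simpa using hg.le_prod_of_le_one hg0 hg1 ∅

/-- Indexes `n ≠ k` by its side of `k` and its distance to `k`, so that the factors of a product
over `n ≠ k` can be matched with those of two copies of a product over `ℕ`. -/
def distanceSide (k n : ℕ) : ℕ ⊕ ℕ :=
  if n < k then .inl (k - n - 1) else .inr (n - k - 1)

lemma distanceSide_injective (k : ℕ) :
    Function.Injective fun n : {n : ℕ // n ≠ k} => distanceSide k n := by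
  rintro ⟨a, ha⟩ ⟨b, hb⟩ hab
  simp only [distanceSide, Subtype.mk.injEq] at hab ⊢
  split_ifs at hab <;> simp only [Sum.inl.injEq, Sum.inr.injEq] at hab <;> omega

section Separated

variable {c : ℝ} {w : ℕ → ℂ} (hc : c ∈ Set.Ioo (0 : ℝ) 1) (hw : ∀ n, ‖w n‖ < 1)
  (hratio : ∀ n, (1 - ‖w (n + 1)‖) / (1 - ‖w n‖) ≤ c)
include hc hw hratio

lemma one_sub_pow_div_one_add_pow_le_pd {i j : ℕ} (hij : i < j) :
    (1 - c ^ (j - i)) / (1 + c ^ (j - i)) ≤ pd (w i) (w j) := by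
  have hdecay : 1 - ‖w j‖ ≤ c ^ (j - i) * (1 - ‖w i‖) := by
    simpa [Nat.add_sub_cancel' hij.le] using
      le_pow_mul_of_div_le hc.1.le (fun n => sub_pos.2 (hw n)) hratio i (j - i)
  rw [pd_comm]
  exact (one_sub_div_one_add_le_of_one_sub_le_mul (norm_nonneg _) (hw i) (hw j)
    (pow_pos hc.1 _) (pow_lt_one₀ hc.1.le hc.2 (by omega)) hdecay).trans
    (div_one_sub_norm_mul_le_pd _ _ (hw j) (hw i))

lemma elim_distanceSide_le_pd (k n : ℕ) (hn : n ≠ k) :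
    Sum.elim (fun j : ℕ => (1 - c ^ (j + 1)) / (1 + c ^ (j + 1)))
      (fun j : ℕ => (1 - c ^ (j + 1)) / (1 + c ^ (j + 1))) (distanceSide k n) ≤
      pd (w k) (w n) := by
  rcases lt_or_gt_of_ne hn with hnk | hkn
  · rw [distanceSide, if_pos hnk, Sum.elim_inl, Nat.sub_add_cancel (by omega), pd_comm]
    exact one_sub_pow_div_one_add_pow_le_pd hc hw hratio hnk
  · rw [distanceSide, if_neg (by omega), Sum.elim_inr, Nat.sub_add_cancel (by omega)]
    exact one_sub_pow_div_one_add_pow_le_pd hc hw hratio hkn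

end Separated

/-- If `{w_n}` is a sequence in the open unit disk with
`(1 - |w_n|)/(1 - |w_{n-1}|) ≤ c < 1`, then for every `k`,
`∏_{j ≠ k} d(w_k, w_j) ≥ (∏_{j=1}^∞ (1 - c^j)/(1 + c^j))²`. -/
theorem stmt0 (c : ℝ) (hc : c ∈ Set.Ioo (0 : ℝ) 1) (w : ℕ → ℂ)
    (hw : ∀ n, w n ∈ ball (0 : ℂ) 1)
    (hratio : ∀ n, (1 - ‖w (n + 1)‖) / (1 - ‖w n‖) ≤ c) :
    ∀ k : ℕ, (∏' j : {j : ℕ // j ≠ k}, pd (w k) (w (j : ℕ))) ≥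
      (∏' j : ℕ, (1 - c ^ (j + 1)) / (1 + c ^ (j + 1))) ^ 2 := by
  intro k
  have hnorm : ∀ n, ‖w n‖ < 1 := fun n => mem_ball_zero_iff.mp (hw n)
  set h : ℕ → ℝ := fun j => (1 - c ^ (j + 1)) / (1 + c ^ (j + 1))
  have hpow0 : ∀ j : ℕ, 0 ≤ c ^ (j + 1) := fun j => pow_nonneg hc.1.le _
  have hpow1 : ∀ j : ℕ, c ^ (j + 1) ≤ 1 := fun j => pow_le_one₀ hc.1.le hc.2.le
  have hprod : HasProd (Sum.elim h h) ((∏' j, h j) ^ 2) := by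
    have hh := (multipliable_one_sub_pow_div_one_add_pow hc.1.le hc.2).hasProd
    exact sq (∏' j, h j) ▸ HasProd.sum hh hh
  refine hprod.le_tprod_of_injective ?_ ?_ (distanceSide_injective k)
    fun n => elim_distanceSide_le_pd hc hnorm hratio k n n.2
  · rintro (j | j) <;> exact div_nonneg (by linarith [hpow1 j]) (by linarith [hpow0 j])
  · rintro (j | j) <;> exact div_le_one_of_le₀ (by linarith [hpow0 j]) (by linarith [hpow0 j])
end

section
/- Let x, y ∈ (0,1) and let θ ∈ ℝ be such that the point 1 - y·e^{iθ} lies in the open unit disk 𝔻. Then d(1-x, 1-y·e^{iθ}) ≥ d(1-x, 1-y) = |x - y|/(x + y - xy); explicitly, |(1-x) - (1 - y e^{iθ})| / |1 - (1-x)(1 - y e^{-iθ})| ≥ |x - y|/(x + y - xy). -/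
/-!
Write `1 - y e^{iθ} = 1 - y u` with `‖u‖ = 1`. Then `d(1-x, 1-yu) = ‖x - yu‖ / ‖x + (1-x)yu‖`, and
both squared norms are affine in `Re u`. So `‖x - yu‖² s² - (x-y)² ‖x + (1-x)yu‖²`, with
`s = x + y - xy`, is affine in `Re u` and vanishes at `u = 1`; its slope is negative, so it is
nonnegative for `Re u ≤ 1`. The hypothesis that `1 - yu` lies in the disk gives `Re u > 0`, which
keeps the denominator away from zero.
-/

open Complex Filter Metric

theorem Complex.sq_norm_ofReal_add_ofReal_mul (a b : ℝ) {u : ℂ} (hu : ‖u‖ = 1) :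
    ‖(a : ℂ) + b * u‖ ^ 2 = a ^ 2 + 2 * a * b * u.re + b ^ 2 := by
  have hu2 : u.re ^ 2 + u.im ^ 2 = 1 := by
    have h := Complex.sq_norm u
    rw [hu, normSq_apply] at h
    linear_combination -h
  rw [Complex.sq_norm, Complex.normSq_apply]
  simp only [add_re, ofReal_re, mul_re, ofReal_im, zero_mul, sub_zero, add_im, mul_im, zero_add]
  linear_combination b ^ 2 * hu2

theorem Complex.re_pos_of_one_sub_mem_ball {w : ℂ} (h : 1 - w ∈ ball (0 : ℂ) 1) : 0 < w.re := by
  rw [mem_ball_zero_iff] at h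
  have := (re_le_norm (1 - w)).trans_lt h
  simp only [sub_re, one_re] at this
  linarith

theorem pd_one_sub_ofReal_one_sub_mul (x y : ℝ) (u : ℂ) :
    pd (1 - x) (1 - y * u) = ‖(x : ℂ) + (-y : ℝ) * u‖ / ‖(x : ℂ) + ((1 - x) * y : ℝ) * u‖ := by
  rw [pd, norm_sub_rev, map_sub, map_one, conj_ofReal]
  congr 2 <;> push_cast <;> ring

theorem abs_sub_div_le_norm_div_norm {x y : ℝ} (hx0 : 0 ≤ x) (hx1 : x ≤ 1) (hy : 0 ≤ y)
    (hs : 0 < x + y - x * y) {u : ℂ} (hu : ‖u‖ = 1)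
    (hD : 0 < ‖(x : ℂ) + ((1 - x) * y : ℝ) * u‖) :
    |x - y| / (x + y - x * y) ≤ ‖(x : ℂ) + (-y : ℝ) * u‖ / ‖(x : ℂ) + ((1 - x) * y : ℝ) * u‖ := by
  rw [div_le_div_iff₀ hs hD]
  refine (pow_le_pow_iff_left₀ (by positivity) (by positivity) two_ne_zero).mp ?_
  rw [mul_pow, mul_pow, sq_abs, Complex.sq_norm_ofReal_add_ofReal_mul _ _ hu,
    Complex.sq_norm_ofReal_add_ofReal_mul _ _ hu]
  have hre : u.re ≤ 1 := hu ▸ re_le_norm u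
  have key : 0 ≤ 2 * x * y * (1 - u.re) * ((x + y - x * y) ^ 2 + (1 - x) * (x - y) ^ 2) := by
    have := sub_nonneg.mpr hre
    have := sub_nonneg.mpr hx1
    positivity
  linear_combination key

/-- For `x, y ∈ (0,1)` and `θ ∈ ℝ` with `1 - y e^{iθ}` in the unit disk,
`d(1-x, 1-y e^{iθ}) ≥ d(1-x, 1-y) = |x-y|/(x+y-xy)`. -/
theorem stmt4 (x y : ℝ) (hx : x ∈ Set.Ioo (0 : ℝ) 1) (hy : y ∈ Set.Ioo (0 : ℝ) 1)
    (θ : ℝ) (hmem : (1 - (y : ℂ) * Complex.exp (Complex.I * θ)) ∈ ball (0 : ℂ) 1) :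
    pd (1 - (x : ℂ)) (1 - (y : ℂ)) = |x - y| / (x + y - x * y) ∧
    pd (1 - (x : ℂ)) (1 - (y : ℂ) * Complex.exp (Complex.I * θ)) ≥
      |x - y| / (x + y - x * y) := by
  obtain ⟨hx0, hx1⟩ := hx
  obtain ⟨hy0, -⟩ := hy
  have hs : 0 < x + y - x * y := by nlinarith
  set u := Complex.exp (Complex.I * θ)
  have hu : ‖u‖ = 1 := norm_exp_I_mul_ofReal θ
  have hyu : 0 < y * u.re := by simpa using re_pos_of_one_sub_mem_ball hmem
  have hD : 0 < ‖(x : ℂ) + ((1 - x) * y : ℝ) * u‖ := by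
    refine lt_of_lt_of_le ?_ (re_le_norm _)
    simp only [add_re, ofReal_re, re_ofReal_mul]
    nlinarith
  constructor
  · have h := pd_one_sub_ofReal_one_sub_mul x y 1
    simp only [mul_one, ← ofReal_add, norm_real, Real.norm_eq_abs] at h
    rw [h, ← sub_eq_add_neg, abs_of_pos (by linarith : 0 < x + (1 - x) * y)]
    congr 1
    ring
  · rw [ge_iff_le, pd_one_sub_ofReal_one_sub_mul]
    exact abs_sub_div_le_norm_div_norm hx0.le hx1.le hy0.le hs hu hD
end

section
/- Let x_n = 1 - 1/n! for n ≥ 2, let θ₁ be a real number with 0 < |θ₁| < π/2, and for m ≥ 2 set z_m = 1 - (1/m!)·e^{iθ₁} (which lies in 𝔻). Then for every m ≥ 2, ∏_{n ≥ 2, n ≠ m} d(x_n, z_m) ≥ (1/4)·c², where c = ∏_{k=2}^∞ (1 - 1/k!)/(1 + 1/k!). -/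
/-
Write `x_n = 1 - a` and `z_m = 1 - b e^{iθ₁}` with `a = 1/n!`, `b = 1/m!`. Then
`x_n - z_m = b e^{iθ₁} - a` has modulus at least `|b - a|`, while
`1 - x_n z_m = a + b(1 - a) e^{iθ₁}` has modulus at most `a + b`, so
`d(x_n, z_m) ≥ |b - a| / (a + b)`. For `i < j`, `i! (j - i + 1)! ≤ j!`, which bounds this
ratio below by the factor `(1 - 1/p!) / (1 + 1/p!)` of `c` with `p = |n - m| + 1`. The indices
`n < m` and the indices `n > m` each use every factor of `c` at most once, and all factors lie
in `[0, 1]`, so every finite subproduct is at least `c²`. Since `c ≤ 1`, this bound survives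
even if the product over `n` diverges, where `tprod` takes the value `1`.
-/

open Complex Filter Metric

open scoped Nat

theorem le_tprod_of_le_prod' {ι α : Type*} [Preorder α] [CommMonoid α] [TopologicalSpace α]
    [ClosedIciTopology α] {f : ι → α} {c : α} (hc : c ≤ 1) (h : ∀ s, c ≤ ∏ i ∈ s, f i) :
    c ≤ ∏' i, f i := by
  by_cases hf : Multipliable f
  · exact le_hasProd_of_le_prod hf.hasProd h
  · rwa [tprod_eq_one_of_not_multipliable hf]

theorem Multipliable.tprod_le_prod_of_le_one {ι : Type*} {f : ι → ℝ} (hf : Multipliable f)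
    (h0 : ∀ i, 0 ≤ f i) (h1 : ∀ i, f i ≤ 1) (s : Finset ι) :
    ∏' i, f i ≤ ∏ i ∈ s, f i := by
  classical
  refine le_of_tendsto hf.hasProd (eventually_ge_atTop s |>.mono fun t hst => ?_)
  rw [← Finset.prod_sdiff hst]
  exact mul_le_of_le_one_left (Finset.prod_nonneg fun i _ => h0 i)
    (Finset.prod_le_one (fun i _ => h0 i) fun i _ => h1 i)

theorem Multipliable.sq_tprod_le_prod_of_sumElim_le {ι : Type*} {f : ℕ → ℝ}
    (hf : Multipliable f) (h0 : ∀ k, 0 ≤ f k) (h1 : ∀ k, f k ≤ 1) {e : ι → ℕ ⊕ ℕ}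
    {s : Finset ι} (he : Set.InjOn e s) {g : ι → ℝ} (hg : ∀ i ∈ s, Sum.elim f f (e i) ≤ g i) :
    (∏' k, f k) ^ 2 ≤ ∏ i ∈ s, g i := by
  classical
  have hF0 : ∀ j, 0 ≤ Sum.elim f f j := by rintro (k | k) <;> exact h0 k
  have hF1 : ∀ j, Sum.elim f f j ≤ 1 := by rintro (k | k) <;> exact h1 k
  calc (∏' k, f k) ^ 2 = ∏' j, Sum.elim f f j := by
        rw [Multipliable.tprod_sum (f := Sum.elim f f) hf hf, sq]
        rfl
    _ ≤ ∏ i ∈ s, Sum.elim f f (e i) := by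
        rw [← Finset.prod_image he]
        exact (Multipliable.sum (Sum.elim f f) hf hf).tprod_le_prod_of_le_one hF0 hF1 _
    _ ≤ ∏ i ∈ s, g i := Finset.prod_le_prod (fun i _ => hF0 _) hg

theorem multipliable_one_sub_div_one_add {ι : Type*} {u : ι → ℝ} (hu : Summable u)
    (h0 : ∀ i, 0 ≤ u i) : Multipliable fun i => (1 - u i) / (1 + u i) := by
  have hdecomp : ∀ i, (1 - u i) / (1 + u i) = 1 + -(2 * u i / (1 + u i)) := by
    intro i
    have : 1 + u i ≠ 0 := by linarith [h0 i]
    field_simp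
    ring
  simp only [hdecomp]
  refine Real.multipliable_one_add_of_summable ((hu.mul_left 2).of_norm_bounded fun i => ?_)
  rw [norm_neg, Real.norm_of_nonneg (by have := h0 i; positivity)]
  exact div_le_self (by linarith [h0 i]) (by linarith [h0 i])

theorem one_sub_div_one_add_le_sub_div_add {a b t : ℝ} (ha : 0 ≤ a) (hb : 0 < b) (ht : 0 ≤ t)
    (hab : a ≤ t * b) : (1 - t) / (1 + t) ≤ (b - a) / (b + a) := by
  rw [div_le_div_iff₀ (by positivity) (by positivity)]
  nlinarith

theorem Nat.factorial_mul_factorial_succ_le_factorial_add (m d : ℕ) (hm : 1 ≤ m) :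
    m ! * (d + 1)! ≤ (m + d)! := by
  have hd : (d + 1)! = (1 + 1).ascFactorial d := by
    simpa [add_comm] using (Nat.factorial_mul_ascFactorial 1 d).symm
  rw [hd, ← Nat.factorial_mul_ascFactorial]
  exact Nat.mul_le_mul_left _ (Nat.ascFactorial_le _ (by omega))

noncomputable def factorialRatio (k : ℕ) : ℝ :=
  (1 - 1 / ((k + 2)! : ℝ)) / (1 + 1 / ((k + 2)! : ℝ))

theorem factorialRatio_nonneg (k : ℕ) : 0 ≤ factorialRatio k := by
  have : 1 / ((k + 2)! : ℝ) ≤ 1 :=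
    div_le_one_of_le₀ (by exact_mod_cast (k + 2).factorial_pos) (by positivity)
  exact div_nonneg (by linarith) (by positivity)

theorem factorialRatio_le_one (k : ℕ) : factorialRatio k ≤ 1 := by
  have : 0 ≤ 1 / ((k + 2)! : ℝ) := by positivity
  exact div_le_one_of_le₀ (by linarith) (by linarith)

theorem multipliable_factorialRatio : Multipliable factorialRatio := by
  refine multipliable_one_sub_div_one_add ?_ fun k => by positivity
  simpa using (summable_nat_add_iff 2).2 (Real.summable_pow_div_factorial 1)

theorem factorialRatio_le_abs_sub_div_add {i j : ℕ} (hi : 1 ≤ i) (hij : i < j) :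
    factorialRatio (j - i - 1) ≤ |1 / (i ! : ℝ) - 1 / j !| / (1 / i ! + 1 / j !) := by
  have hfac : (i ! : ℝ) * (j - i - 1 + 2)! ≤ j ! := by
    have := Nat.factorial_mul_factorial_succ_le_factorial_add i (j - i) hi
    rw [show i + (j - i) = j by omega, show j - i + 1 = j - i - 1 + 2 by omega] at this
    exact_mod_cast this
  refine (one_sub_div_one_add_le_sub_div_add (by positivity) (by positivity) (by positivity)
    ?_).trans (div_le_div_of_nonneg_right (le_abs_self _) (by positivity))
  rw [div_mul_div_comm, one_mul, div_le_div_iff₀ (by positivity) (by positivity)]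
  simpa [mul_comm] using hfac

theorem norm_one_sub_conj_mul_pos {z w : ℂ} (hz : ‖z‖ ≤ 1) (hw : ‖w‖ < 1) :
    0 < ‖1 - starRingEnd ℂ z * w‖ := by
  have : ‖starRingEnd ℂ z * w‖ < 1 := by
    rw [norm_mul, Complex.norm_conj]
    nlinarith [norm_nonneg z, norm_nonneg w]
  exact norm_pos_iff.2 fun h => by simp [← sub_eq_zero.1 h] at this

theorem abs_sub_div_add_le_pd {a b : ℝ} {E : ℂ} (ha : 0 ≤ a) (ha1 : a ≤ 1) (hb : 0 ≤ b)
    (hE : ‖E‖ = 1) (hz : ‖1 - (b : ℂ) * E‖ < 1) :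
    |a - b| / (a + b) ≤ pd (1 - a) (1 - b * E) := by
  have hx : ‖(1 : ℂ) - a‖ ≤ 1 := by
    rw [← Complex.ofReal_one, ← Complex.ofReal_sub, Complex.norm_real, Real.norm_eq_abs,
      abs_le]
    constructor <;> linarith
  have hnum : |a - b| ≤ ‖(1 - a : ℂ) - (1 - b * E)‖ := by
    calc |a - b| = |‖(a : ℂ)‖ - ‖(b : ℂ) * E‖| := by
          simp [hE, abs_of_nonneg ha, abs_of_nonneg hb]
      _ ≤ ‖(a : ℂ) - b * E‖ := abs_norm_sub_norm_le _ _
      _ = ‖(1 - a : ℂ) - (1 - b * E)‖ := by rw [← norm_neg]; ring_nf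
  have hden : ‖1 - starRingEnd ℂ (1 - a) * (1 - b * E)‖ ≤ a + b :=
    calc ‖1 - starRingEnd ℂ (1 - a) * (1 - b * E)‖ = ‖(a : ℂ) + (b * (1 - a) : ℝ) * E‖ := by
          simp only [map_sub, map_one, Complex.conj_ofReal]; push_cast; ring_nf
      _ ≤ a + b * (1 - a) := by
          refine (norm_add_le _ _).trans_eq ?_
          rw [norm_mul, hE, mul_one, Complex.norm_real, Complex.norm_real, Real.norm_of_nonneg ha,
            Real.norm_of_nonneg (by nlinarith)]
      _ ≤ a + b := by nlinarith
  exact div_le_div₀ (norm_nonneg _) hnum (norm_one_sub_conj_mul_pos hx hz) hden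

def gapIndex (m n : ℕ) : ℕ ⊕ ℕ :=
  if n < m then .inl (m - n - 1) else .inr (n - m - 1)

theorem injOn_gapIndex (m : ℕ) : Set.InjOn (gapIndex m) {n | n ≠ m} := by
  intro n hn n' hn' h
  simp only [gapIndex] at h
  split_ifs at h <;> simp only [Sum.inl.injEq, Sum.inr.injEq] at h <;> grind

theorem sumElim_factorialRatio_gapIndex_le_pd {m n : ℕ} {E : ℂ} (hm : 1 ≤ m) (hn : 1 ≤ n)
    (hnm : n ≠ m) (hE : ‖E‖ = 1) (hz : ‖1 - 1 / (m ! : ℂ) * E‖ < 1) :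
    Sum.elim factorialRatio factorialRatio (gapIndex m n) ≤
      pd (1 - 1 / (n ! : ℂ)) (1 - 1 / (m ! : ℂ) * E) := by
  have hpd := abs_sub_div_add_le_pd (a := 1 / n !) (b := 1 / m !) (by positivity)
    (div_le_one_of_le₀ (by exact_mod_cast n.factorial_pos) (by positivity)) (by positivity) hE
    (by push_cast; exact hz)
  push_cast at hpd
  refine le_trans ?_ hpd
  rcases lt_or_gt_of_ne hnm with hlt | hgt
  · simpa [gapIndex, hlt] using factorialRatio_le_abs_sub_div_add hn hlt
  · simpa [gapIndex, hgt.not_gt, abs_sub_comm, add_comm] using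
      factorialRatio_le_abs_sub_div_add hm hgt

theorem stmt5_general (θ₁ : ℝ)
    (hmem : ∀ m : ℕ, 2 ≤ m →
      (1 - (1 / (Nat.factorial m : ℂ)) * Complex.exp (Complex.I * θ₁)) ∈ ball (0 : ℂ) 1) :
    ∀ m : ℕ, 2 ≤ m →
      (∏' n : {n : ℕ // 2 ≤ n ∧ n ≠ m},
          pd (1 - 1 / (Nat.factorial (n : ℕ) : ℂ))
            (1 - (1 / (Nat.factorial m : ℂ)) * Complex.exp (Complex.I * θ₁))) ≥
        (1 / 4) * (∏' k : ℕ,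
          (1 - 1 / (Nat.factorial (k + 2) : ℝ)) / (1 + 1 / (Nat.factorial (k + 2) : ℝ))) ^ 2 := by
  intro m hm
  have hE : ‖Complex.exp (Complex.I * θ₁)‖ = 1 := by
    rw [mul_comm, Complex.norm_exp_ofReal_mul_I]
  have hz := mem_ball_zero_iff.1 (hmem m hm)
  have hc : ∏' k, factorialRatio k ≤ 1 := by
    simpa using multipliable_factorialRatio.tprod_le_prod_of_le_one factorialRatio_nonneg
      factorialRatio_le_one ∅
  have hc1 : (∏' k, factorialRatio k) ^ 2 ≤ 1 :=
    pow_le_one₀ (tprod_nonneg factorialRatio_nonneg) hc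
  show 1 / 4 * (∏' k, factorialRatio k) ^ 2 ≤ _
  refine le_tprod_of_le_prod' (by linarith) fun s => le_trans (by nlinarith) <|
    multipliable_factorialRatio.sq_tprod_le_prod_of_sumElim_le factorialRatio_nonneg
      factorialRatio_le_one ((injOn_gapIndex m).comp Subtype.val_injective.injOn fun n _ => n.2.2)
      fun n _ => sumElim_factorialRatio_gapIndex_le_pd (by omega) (by omega) n.2.2 hE hz

/-- With `x_n = 1 - 1/n!` (`n ≥ 2`), `0 < |θ₁| < π/2` and
`z_m = 1 - (1/m!) e^{iθ₁}` (lying in the unit disk), one has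
`∏_{n ≥ 2, n ≠ m} d(x_n, z_m) ≥ (1/4) c²` where `c = ∏_{k=2}^∞ (1 - 1/k!)/(1 + 1/k!)`. -/
theorem stmt5 (θ₁ : ℝ) (h1 : 0 < |θ₁|) (h2 : |θ₁| < Real.pi / 2)
    (hmem : ∀ m : ℕ, 2 ≤ m →
      (1 - (1 / (Nat.factorial m : ℂ)) * Complex.exp (Complex.I * θ₁)) ∈ ball (0 : ℂ) 1) :
    ∀ m : ℕ, 2 ≤ m →
      (∏' n : {n : ℕ // 2 ≤ n ∧ n ≠ m},
          pd (1 - 1 / (Nat.factorial (n : ℕ) : ℂ))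
            (1 - (1 / (Nat.factorial m : ℂ)) * Complex.exp (Complex.I * θ₁))) ≥
        (1 / 4) * (∏' k : ℕ,
          (1 - 1 / (Nat.factorial (k + 2) : ℝ)) / (1 + 1 / (Nat.factorial (k + 2) : ℝ))) ^ 2 :=
  stmt5_general θ₁ hmem
end

section
/- Let θ₁ be a real number with 0 < |θ₁| < π/2. Then lim_{n→∞} d(1 - 1/n!, 1 - (1/n!)·e^{iθ₁}) = |1 - e^{iθ₁}| / |1 + e^{iθ₁}|, and this limit is strictly positive. -/
open Complex Filter Metric

open Topology

/-!
For real `t ≠ 0`, the factor `t` cancels between numerator and denominator: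
`d(1 - t, 1 - t w) = |1 - w| / |1 + w - t w|`, which tends to `|1 - w| / |1 + w|` as `t → 0`.
With `w = e^{iθ}` the limit is `|sin (θ/2)| / |cos (θ/2)|`, positive for `0 < |θ| < π`.
-/

theorem pd_one_sub_ofReal_mul {t : ℝ} (ht : t ≠ 0) (w : ℂ) :
    pd (1 - t) (1 - t * w) = ‖1 - w‖ / ‖1 + w - t * w‖ := by
  have hnum : (1 - t : ℂ) - (1 - t * w) = t * -(1 - w) := by ring
  have hden : 1 - (1 - t : ℂ) * (1 - t * w) = t * (1 + w - t * w) := by ring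
  have ht' : ‖(t : ℂ)‖ ≠ 0 := by simpa using ht
  rw [pd, map_sub, map_one, conj_ofReal, hnum, hden, norm_mul, norm_mul, norm_neg,
    mul_div_mul_left _ _ ht']

theorem tendsto_pd_one_sub_ofReal_mul {ι : Type*} {l : Filter ι} {t : ι → ℝ}
    (ht : Tendsto t l (𝓝[≠] 0)) {w : ℂ} (hw : 1 + w ≠ 0) :
    Tendsto (fun i => pd (1 - t i) (1 - t i * w)) l (𝓝 (‖1 - w‖ / ‖1 + w‖)) := by
  have hne : ∀ᶠ i in l, t i ≠ 0 := ht.eventually_mem self_mem_nhdsWithin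
  have hlim : Tendsto (fun i => ‖1 + w - (t i : ℂ) * w‖) l (𝓝 ‖1 + w‖) := by
    have h0 : Tendsto (fun i => (t i : ℂ)) l (𝓝 0) :=
      (continuous_ofReal.tendsto 0).comp (tendsto_nhdsWithin_iff.mp ht).1
    simpa using ((tendsto_const_nhds (x := 1 + w)).sub (h0.mul_const w)).norm
  refine (tendsto_const_nhds.div hlim (norm_ne_zero_iff.mpr hw)).congr' ?_
  filter_upwards [hne] with i hi using (pd_one_sub_ofReal_mul hi w).symm

theorem norm_one_add_exp_I_mul_ofReal (x : ℝ) :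
    ‖1 + exp (I * x)‖ = ‖2 * Real.cos (x / 2)‖ := by
  have hshift : exp (I * ↑(x + Real.pi)) = -exp (I * x) := by
    rw [ofReal_add, mul_add, exp_add, mul_comm I (Real.pi : ℂ), exp_pi_mul_I, mul_neg_one]
  have h := norm_exp_I_mul_ofReal_sub_one (x + Real.pi)
  rwa [hshift, add_div, Real.sin_add_pi_div_two, ← norm_neg, neg_sub, sub_neg_eq_add] at h

theorem one_sub_exp_I_mul_ofReal_ne_zero {x : ℝ} (h0 : x ≠ 0) (hx : |x| < 2 * Real.pi) :
    1 - exp (I * x) ≠ 0 := by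
  obtain ⟨hlo, hhi⟩ := abs_lt.mp hx
  have hsin : Real.sin (x / 2) ≠ 0 := fun h =>
    h0 (by linarith [(Real.sin_eq_zero_iff_of_lt_of_lt (by linarith) (by linarith)).mp h])
  rw [← norm_ne_zero_iff, norm_sub_rev, norm_exp_I_mul_ofReal_sub_one]
  simpa using hsin

theorem one_add_exp_I_mul_ofReal_ne_zero {x : ℝ} (hx : |x| < Real.pi) :
    1 + exp (I * x) ≠ 0 := by
  obtain ⟨hlo, hhi⟩ := abs_lt.mp hx
  have hcos : 0 < Real.cos (x / 2) := Real.cos_pos_of_mem_Ioo ⟨by linarith, by linarith⟩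
  rw [← norm_ne_zero_iff, norm_one_add_exp_I_mul_ofReal]
  simpa using hcos.ne'

theorem tendsto_one_div_factorial_nhdsNE_zero :
    Tendsto (fun n : ℕ => 1 / (n.factorial : ℝ)) atTop (𝓝[≠] 0) := by
  simp only [one_div]
  exact (tendsto_inv_atTop_nhdsGT_zero.mono_right (nhdsWithin_mono _ fun _ h => ne_of_gt h)).comp
    (tendsto_natCast_atTop_atTop.comp factorial_tendsto_atTop)

/-- For `0 < |θ₁| < π/2`,
`lim_{n→∞} d(1 - 1/n!, 1 - (1/n!) e^{iθ₁}) = |1 - e^{iθ₁}|/|1 + e^{iθ₁}| > 0`. -/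
theorem stmt6 (θ₁ : ℝ) (h1 : 0 < |θ₁|) (h2 : |θ₁| < Real.pi / 2) :
    Tendsto (fun n : ℕ =>
        pd (1 - 1 / (Nat.factorial n : ℂ))
          (1 - (1 / (Nat.factorial n : ℂ)) * Complex.exp (Complex.I * θ₁))) atTop
      (nhds (‖1 - Complex.exp (Complex.I * θ₁)‖ /
        ‖1 + Complex.exp (Complex.I * θ₁)‖)) ∧
    0 < ‖1 - Complex.exp (Complex.I * θ₁)‖ /
        ‖1 + Complex.exp (Complex.I * θ₁)‖ := by
  have hπ := Real.pi_pos
  have hsub := one_sub_exp_I_mul_ofReal_ne_zero (abs_pos.mp h1) (by linarith)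
  have hadd := one_add_exp_I_mul_ofReal_ne_zero (x := θ₁) (by linarith)
  refine ⟨?_, div_pos (norm_pos_iff.mpr hsub) (norm_pos_iff.mpr hadd)⟩
  have hcast : ∀ n : ℕ, (1 / (n.factorial : ℂ)) = ((1 / (n.factorial : ℝ) : ℝ) : ℂ) := by
    intro n; push_cast; rfl
  simpa only [hcast] using tendsto_pd_one_sub_ofReal_mul tendsto_one_div_factorial_nhdsNE_zero hadd
end

section
/- Let a ∈ 𝔻 with a ∉ ℝ, let x_n = 1 - 1/n! for n ≥ 2, and let B(z) = ((a - z)/(1 - conj(a)·z)) · ∏_{n=2}^∞ (x_n - z)/(1 - x_n·z) for z ∈ 𝔻 (the infinite product converges since ∑_n (1 - x_n) < ∞). Then for every real θ₁ with 0 < |θ₁| < π/2, liminf_{m→∞} |B(1 - (1/m!)·e^{iθ₁})| > 0. -/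
/-!
Write `z_m = 1 - w_m` with `w_m = e^{iθ₁}/m!`. The Möbius factor at `a` is continuous at `1`, where
it is unimodular. For a real zero `x = 1 - t` one has
`1 - |φ_x(z)| ≤ (1 - x²)(1 - |z|²)/|1 - x z|² ≤ 4 t |w| / |t + (1 - t) w|²`, and
`|t + (1 - t) w|` dominates both `t` (as `Re w ≥ 0`) and `|Im w| / 2 = |sin θ₁| / (2 m!)`.
For `t = 1/k!` this bounds the defect by `16/sin² θ₁ · min(k!/m!, m!/k!)`, whose sum over `k ≠ m`
is `O(1/m)`, so the factors with `k ≠ m` have product at least `1/2` for large `m`. The remaining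
factor `k = m` equals `(e^{iθ₁} - 1)/(1 + (1 - 1/m!) e^{iθ₁})`, of modulus at least
`|e^{iθ₁} - 1| / 2`.
-/

open Complex Filter Metric

/-- The thin Blaschke product with simple zeros `a` and `x_n = 1 - 1/n!` (`n ≥ 2`):
`B(z) = ((a - z)/(1 - conj a · z)) · ∏_{n=2}^∞ (x_n - z)/(1 - x_n z)`. -/
noncomputable def B (a : ℂ) (z : ℂ) : ℂ :=
  ((a - z) / (1 - (starRingEnd ℂ) a * z)) *
    ∏' n : ℕ, (((1 - 1 / (Nat.factorial (n + 2) : ℝ)) : ℂ) - z) /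
      (1 - ((1 - 1 / (Nat.factorial (n + 2) : ℝ)) : ℂ) * z)

open Finset Topology
open scoped ComplexConjugate Nat

noncomputable def blaschkeFactor (a z : ℂ) : ℂ := (a - z) / (1 - conj a * z)

noncomputable def factorialBlaschke (z : ℂ) : ℂ :=
  ∏' n : ℕ, blaschkeFactor ((1 - 1 / ((n + 2)! : ℝ) : ℝ) : ℂ) z

theorem B_eq_blaschkeFactor_mul_factorialBlaschke (a z : ℂ) :
    B a z = blaschkeFactor a z * factorialBlaschke z := by
  simp only [B, factorialBlaschke, blaschkeFactor, conj_ofReal]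
  push_cast
  rfl

section blaschkeFactor

variable {a z : ℂ}

theorem normSq_one_sub_conj_mul_sub_normSq_sub (a z : ℂ) :
    normSq (1 - conj a * z) - normSq (a - z) = (1 - normSq a) * (1 - normSq z) := by
  simp only [normSq_apply, sub_re, sub_im, mul_re, mul_im, conj_re, conj_im, one_re, one_im]
  ring

theorem one_sub_sq_norm_blaschkeFactor (h : 1 - conj a * z ≠ 0) :
    1 - ‖blaschkeFactor a z‖ ^ 2 = (1 - ‖a‖ ^ 2) * (1 - ‖z‖ ^ 2) / ‖1 - conj a * z‖ ^ 2 := by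
  have hpos : 0 < ‖1 - conj a * z‖ ^ 2 := by positivity
  rw [blaschkeFactor, norm_div, div_pow, eq_div_iff hpos.ne', sub_mul, div_mul_cancel₀ _ hpos.ne']
  simp only [← normSq_eq_norm_sq]
  linarith [normSq_one_sub_conj_mul_sub_normSq_sub a z]

theorem norm_blaschkeFactor_le_one (ha : ‖a‖ ≤ 1) (hz : ‖z‖ ≤ 1) : ‖blaschkeFactor a z‖ ≤ 1 := by
  by_cases h : 1 - conj a * z = 0
  · simp [blaschkeFactor, h]
  have hrhs : 0 ≤ (1 - ‖a‖ ^ 2) * (1 - ‖z‖ ^ 2) / ‖1 - conj a * z‖ ^ 2 := by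
    apply div_nonneg (mul_nonneg _ _) (sq_nonneg _) <;> nlinarith [norm_nonneg a, norm_nonneg z]
  refine (sq_le_one_iff₀ (norm_nonneg _)).mp ?_
  linarith [one_sub_sq_norm_blaschkeFactor h]

theorem one_sub_norm_blaschkeFactor_le (ha : ‖a‖ ≤ 1) (hz : ‖z‖ ≤ 1) (h : 1 - conj a * z ≠ 0) :
    1 - ‖blaschkeFactor a z‖ ≤ (1 - ‖a‖ ^ 2) * (1 - ‖z‖ ^ 2) / ‖1 - conj a * z‖ ^ 2 := by
  rw [← one_sub_sq_norm_blaschkeFactor h]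
  nlinarith [norm_nonneg (blaschkeFactor a z), norm_blaschkeFactor_le_one ha hz]

theorem tendsto_norm_blaschkeFactor_nhds_one (ha : a ≠ 1) :
    Tendsto (fun z ↦ ‖blaschkeFactor a z‖) (𝓝 1) (𝓝 1) := by
  have hconj : 1 - conj a * 1 = conj (1 - a) := by simp
  have hden : 1 - conj a * 1 ≠ 0 := by
    rw [hconj]
    exact (map_ne_zero _).mpr (sub_ne_zero.mpr (Ne.symm ha))
  have hone : ‖blaschkeFactor a 1‖ = 1 := by
    rw [blaschkeFactor, hconj, norm_div, norm_conj, norm_sub_rev]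
    exact div_self (norm_ne_zero_iff.mpr (sub_ne_zero.mpr (Ne.symm ha)))
  have hcont : ContinuousAt (fun z ↦ ‖blaschkeFactor a z‖) 1 :=
    ((continuousAt_const.sub continuousAt_id).div
      (continuousAt_const.sub (continuousAt_const.mul continuousAt_id)) hden).norm
  simpa [hone] using hcont.tendsto

end blaschkeFactor

section NearOne

variable {t : ℝ} {w : ℂ}

theorem one_sub_ofReal_one_sub_mul_one_sub (t : ℝ) (w : ℂ) :
    1 - ((1 - t : ℝ) : ℂ) * (1 - w) = t + (1 - t) * w := by
  push_cast
  ring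

theorem re_nonneg_of_norm_one_sub_le_one (hw : ‖1 - w‖ ≤ 1) : 0 ≤ w.re := by
  have h := (sq_le_one_iff₀ (norm_nonneg _)).mpr hw
  rw [← normSq_eq_norm_sq, normSq_apply] at h
  simp only [sub_re, one_re, sub_im, one_im] at h
  nlinarith [sq_nonneg w.im]

theorem le_norm_ofReal_add_mul (ht : t ≤ 1) (hw : 0 ≤ w.re) : t ≤ ‖(t : ℂ) + (1 - t) * w‖ :=
  calc t ≤ ((t : ℂ) + (1 - t) * w).re := by
        simp only [add_re, ofReal_re, mul_re, sub_re, one_re, sub_im, one_im, ofReal_im]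
        nlinarith
    _ ≤ _ := re_le_norm _

theorem abs_im_div_two_le_norm_ofReal_add_mul (ht : t ≤ 1 / 2) :
    |w.im| / 2 ≤ ‖(t : ℂ) + (1 - t) * w‖ :=
  calc |w.im| / 2 ≤ |((t : ℂ) + (1 - t) * w).im| := by
        simp only [add_im, ofReal_im, mul_im, sub_re, one_re, ofReal_re, sub_im, one_im, zero_add,
          sub_zero, zero_mul, add_zero, abs_mul]
        rw [abs_of_nonneg (by linarith : (0 : ℝ) ≤ 1 - t)]
        nlinarith [abs_nonneg w.im]
    _ ≤ _ := abs_im_le_norm _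

theorem one_sub_norm_blaschkeFactor_one_sub_le (ht0 : 0 ≤ t) (ht1 : t ≤ 1) (hw : ‖1 - w‖ ≤ 1)
    (h : (t : ℂ) + (1 - t) * w ≠ 0) :
    1 - ‖blaschkeFactor ((1 - t : ℝ) : ℂ) (1 - w)‖ ≤
      4 * t * ‖w‖ / ‖(t : ℂ) + (1 - t) * w‖ ^ 2 := by
  have hx : ‖((1 - t : ℝ) : ℂ)‖ = 1 - t := by
    rw [norm_real, Real.norm_of_nonneg (by linarith)]
  have key := one_sub_norm_blaschkeFactor_le (by rw [hx]; linarith) hw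
    (by rwa [conj_ofReal, one_sub_ofReal_one_sub_mul_one_sub])
  rw [conj_ofReal, one_sub_ofReal_one_sub_mul_one_sub, hx] at key
  refine key.trans (div_le_div_of_nonneg_right ?_ (sq_nonneg _))
  have hx2 : 1 - (1 - t) ^ 2 ≤ 2 * t := by nlinarith
  have hz2 : 1 - ‖1 - w‖ ^ 2 ≤ 2 * ‖w‖ := by
    nlinarith [norm_le_insert' (1 : ℂ) w, norm_one (α := ℂ), norm_nonneg (1 - w)]
  calc (1 - (1 - t) ^ 2) * (1 - ‖1 - w‖ ^ 2) ≤ (2 * t) * (2 * ‖w‖) :=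
        mul_le_mul hx2 hz2 (by nlinarith [norm_nonneg (1 - w)]) (by positivity)
    _ = 4 * t * ‖w‖ := by ring

theorem one_sub_norm_blaschkeFactor_one_sub_le_min (ht0 : 0 < t) (ht : t ≤ 1 / 2)
    (hw : ‖1 - w‖ ≤ 1) (him : w.im ≠ 0) :
    1 - ‖blaschkeFactor ((1 - t : ℝ) : ℂ) (1 - w)‖ ≤
      16 * ‖w‖ ^ 2 / w.im ^ 2 * min (‖w‖ / t) (t / ‖w‖) := by
  set D := ‖(t : ℂ) + (1 - t) * w‖
  have hDt : t ≤ D := le_norm_ofReal_add_mul (by linarith) (re_nonneg_of_norm_one_sub_le_one hw)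
  have hDim : |w.im| / 2 ≤ D := abs_im_div_two_le_norm_ofReal_add_mul ht
  have hD : 0 < D := ht0.trans_le hDt
  have him2 : 0 < w.im ^ 2 := by positivity
  have hw0 : 0 < ‖w‖ := norm_pos_iff.mpr (fun h ↦ him (by simp [h]))
  have hwim : w.im ^ 2 ≤ ‖w‖ ^ 2 := by
    rw [← sq_abs]
    exact pow_le_pow_left₀ (abs_nonneg _) (abs_im_le_norm w) 2
  refine (one_sub_norm_blaschkeFactor_one_sub_le ht0.le (by linarith) hw
    (norm_pos_iff.mp hD)).trans ?_
  rw [mul_min_of_nonneg _ _ (by positivity)]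
  refine le_min ?_ ?_
  · calc 4 * t * ‖w‖ / D ^ 2 ≤ 4 * t * ‖w‖ / t ^ 2 := by gcongr
      _ = 4 * ‖w‖ / t := by field_simp
      _ ≤ 16 * ‖w‖ ^ 2 / w.im ^ 2 * (‖w‖ / t) := by
        rw [div_mul_div_comm, div_le_div_iff₀ ht0 (by positivity)]
        nlinarith [mul_le_mul_of_nonneg_left hwim (by positivity : (0 : ℝ) ≤ 4 * ‖w‖ * t),
          mul_pos (pow_pos hw0 3) ht0]
  · calc 4 * t * ‖w‖ / D ^ 2 ≤ 4 * t * ‖w‖ / (|w.im| / 2) ^ 2 := by gcongr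
      _ = 16 * ‖w‖ ^ 2 / w.im ^ 2 * (t / ‖w‖) := by
        rw [div_pow, sq_abs]
        field_simp
        norm_num

theorem norm_blaschkeFactor_one_sub_sub_one_le (ht0 : 0 ≤ t) (ht : t ≤ 1 / 2)
    (hw : ‖1 - w‖ ≤ 1) (him : w.im ≠ 0) :
    ‖blaschkeFactor ((1 - t : ℝ) : ℂ) (1 - w) - 1‖ ≤ 4 * t / |w.im| := by
  have hD : 0 < ‖(t : ℂ) + (1 - t) * w‖ :=
    (by positivity : 0 < |w.im| / 2).trans_le (abs_im_div_two_le_norm_ofReal_add_mul ht)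
  have hnum : ((1 - t : ℝ) : ℂ) - (1 - w) - ((t : ℂ) + (1 - t) * w) = -(t * (1 + (1 - w))) := by
    push_cast
    ring
  rw [blaschkeFactor, conj_ofReal, one_sub_ofReal_one_sub_mul_one_sub,
    div_sub_one (norm_pos_iff.mp hD), hnum, norm_div, norm_neg, norm_mul, norm_real,
    Real.norm_of_nonneg ht0]
  have h2 : ‖1 + (1 - w)‖ ≤ 2 := (norm_add_le _ _).trans (by rw [norm_one]; linarith)
  calc t * ‖1 + (1 - w)‖ / ‖(t : ℂ) + (1 - t) * w‖ ≤ t * 2 / (|w.im| / 2) := by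
        gcongr
        · exact abs_im_div_two_le_norm_ofReal_add_mul ht
    _ = 4 * t / |w.im| := by field_simp; ring

theorem norm_sub_one_div_two_le_norm_blaschkeFactor {δ : ℝ} {e : ℂ} (hδ0 : 0 < δ) (hδ1 : δ ≤ 1)
    (he : ‖e‖ ≤ 1) :
    ‖e - 1‖ / 2 ≤ ‖blaschkeFactor ((1 - δ : ℝ) : ℂ) (1 - δ * e)‖ := by
  have hnum : ((1 - δ : ℝ) : ℂ) - (1 - δ * e) = δ * (e - 1) := by
    push_cast
    ring
  have hden : (δ : ℂ) + (1 - δ) * (δ * e) = δ * (1 + (1 - δ) * e) := by ring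
  have hδ : ‖(1 - (δ : ℂ)) * e‖ ≤ 1 - δ := by
    rw [norm_mul, ← ofReal_one, ← ofReal_sub, norm_real, Real.norm_of_nonneg (by linarith)]
    exact mul_le_of_le_one_right (by linarith) he
  have hpos : 0 < ‖1 + (1 - δ) * e‖ := by
    have htri := norm_sub_norm_le (1 : ℂ) (-((1 - (δ : ℂ)) * e))
    rw [norm_neg, norm_one, sub_neg_eq_add] at htri
    linarith
  have hle : ‖1 + (1 - δ) * e‖ ≤ 2 := (norm_add_le _ _).trans (by rw [norm_one]; linarith)
  rw [blaschkeFactor, conj_ofReal, one_sub_ofReal_one_sub_mul_one_sub, hnum, hden,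
    mul_div_mul_left _ _ (ofReal_ne_zero.mpr hδ0.ne'), norm_div]
  exact div_le_div_of_nonneg_left (norm_nonneg _) hpos hle

theorem norm_one_sub_ofReal_mul_le_one {δ : ℝ} {e : ℂ} (he : ‖e‖ = 1) (hδ0 : 0 ≤ δ)
    (hδ : δ ≤ 2 * e.re) : ‖1 - δ * e‖ ≤ 1 := by
  refine (sq_le_one_iff₀ (norm_nonneg _)).mp ?_
  have he2 := normSq_eq_norm_sq e
  rw [he, normSq_apply] at he2
  rw [← normSq_eq_norm_sq, normSq_apply]
  simp only [sub_re, one_re, mul_re, ofReal_re, ofReal_im, zero_mul, sub_zero, sub_im, one_im,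
    mul_im, add_zero, zero_sub]
  nlinarith [mul_le_mul_of_nonneg_left hδ hδ0]

end NearOne

theorem one_sub_sum_le_prod {ι : Type*} {s : Finset ι} {a v : ι → ℝ} (ha : ∀ i ∈ s, 0 ≤ a i)
    (hv : ∀ i ∈ s, 0 ≤ v i) (hav : ∀ i ∈ s, 1 - v i ≤ a i) :
    1 - ∑ i ∈ s, v i ≤ ∏ i ∈ s, a i := by
  classical
  induction s using Finset.induction_on with
  | empty => simp
  | insert j s hj ih =>
    simp only [mem_insert, forall_eq_or_imp] at ha hv hav
    rw [sum_insert hj, prod_insert hj]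
    have hP := ih ha.2 hv.2 hav.2
    have hP0 : 0 ≤ ∏ i ∈ s, a i := prod_nonneg ha.2
    have hS0 : 0 ≤ ∑ i ∈ s, v i := sum_nonneg hv.2
    rcases le_or_gt (1 - ∑ i ∈ s, v i) 0 with h | h
    · nlinarith [mul_nonneg ha.1 hP0]
    · nlinarith [mul_le_mul_of_nonneg_left hP ha.1, mul_le_mul_of_nonneg_right hav.1 h.le,
        mul_nonneg hv.1 hS0]

theorem norm_mul_one_sub_le_norm_tprod {ι R : Type*} [SeminormedCommRing R] [NormMulClass R]
    [NormOneClass R] {f : ι → R} (hf : Multipliable f) {j : ι} {v : ι → ℝ} {S : ℝ}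
    (hv : ∀ i, i ≠ j → 0 ≤ v i) (hfv : ∀ i, i ≠ j → 1 - v i ≤ ‖f i‖)
    (hS : ∀ s : Finset ι, j ∉ s → ∑ i ∈ s, v i ≤ S) :
    ‖f j‖ * (1 - S) ≤ ‖∏' i, f i‖ := by
  classical
  refine ge_of_tendsto hf.hasProd.norm ?_
  filter_upwards [eventually_ge_atTop {j}] with s hs
  rw [← mul_prod_erase s _ (hs (mem_singleton_self j))]
  have hne : ∀ i ∈ s.erase j, i ≠ j := fun i hi ↦ ne_of_mem_erase hi
  refine mul_le_mul_of_nonneg_left ?_ (norm_nonneg _)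
  calc 1 - S ≤ 1 - ∑ i ∈ s.erase j, v i := by linarith [hS _ (notMem_erase j s)]
    _ ≤ _ := one_sub_sum_le_prod (fun i _ ↦ norm_nonneg _) (fun i hi ↦ hv i (hne i hi))
        (fun i hi ↦ hfv i (hne i hi))

theorem norm_tprod_le_one {ι R : Type*} [NormedCommRing R] [NormOneClass R] {f : ι → R}
    (hf : ∀ i, ‖f i‖ ≤ 1) : ‖∏' i, f i‖ ≤ 1 := by
  by_cases h : Multipliable f
  · refine le_of_tendsto (continuous_norm.tendsto _ |>.comp h.hasProd) (.of_forall fun s ↦ ?_)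
    exact (Finset.norm_prod_le _ _).trans (prod_le_one (fun _ _ ↦ norm_nonneg _) fun i _ ↦ hf i)
  · rw [tprod_eq_one_of_not_multipliable h, norm_one]

theorem sum_range_factorial_div_le {m : ℕ} (hm : 2 ≤ m) :
    ∑ k ∈ range m, (k ! : ℝ) / m ! ≤ 2 / m := by
  induction m, hm using Nat.le_induction with
  | base => norm_num [sum_range_succ, Nat.factorial]
  | succ m hm ih =>
    have hm0 : (2 : ℝ) ≤ m := by exact_mod_cast hm
    calc ∑ k ∈ range (m + 1), (k ! : ℝ) / (m + 1)!
        = (∑ k ∈ range m, (k ! : ℝ) / m ! + 1) / (m + 1) := by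
          rw [sum_range_succ, Nat.factorial_succ, ← sum_div, ← sum_div]
          push_cast
          field_simp
      _ ≤ (2 / m + 1) / (m + 1) := by gcongr
      _ ≤ 2 / ↑(m + 1) := by
          push_cast
          gcongr
          linarith [(div_le_one₀ (by linarith : (0 : ℝ) < m)).mpr hm0]

theorem sum_factorial_div_le_of_lt {m : ℕ} (hm : 1 ≤ m) (s : Finset ℕ) (hs : ∀ k ∈ s, m < k) :
    ∑ k ∈ s, (m ! : ℝ) / k ! ≤ 1 / m := by
  have hm0 : (1 : ℝ) ≤ m := by exact_mod_cast hm
  have hsub : s ⊆ (range (s.sup id).succ).filter (m + 1 ≤ ·) := fun k hk ↦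
    mem_filter.mpr ⟨subset_range_sup_succ s hk, hs k hk⟩
  calc ∑ k ∈ s, (m ! : ℝ) / k ! = m ! * ∑ k ∈ s, (1 / k ! : ℝ) := by
        simp_rw [mul_sum, mul_one_div]
    _ ≤ m ! * ∑ k ∈ range (s.sup id).succ with m + 1 ≤ k, (1 / k ! : ℝ) := by
        gcongr
    _ ≤ m ! * ((m + 1).succ / ((m + 1)! * (m + 1 : ℕ))) := by
        gcongr
        exact sum_div_factorial_le _ _ (Nat.succ_pos m)
    _ = (m + 2) / (m + 1) ^ 2 := by
        rw [Nat.factorial_succ]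
        push_cast
        field_simp
        ring
    _ ≤ 1 / m := by
        rw [div_le_div_iff₀ (by positivity) (by positivity)]
        nlinarith

theorem sum_min_factorial_div_le {m : ℕ} (hm : 2 ≤ m) (s : Finset ℕ) (hs : m ∉ s) :
    ∑ k ∈ s, min ((k ! : ℝ) / m !) (m ! / k !) ≤ 3 / m := by
  rw [← sum_filter_add_sum_filter_not s (· < m)]
  have hlt : ∑ k ∈ s with k < m, min ((k ! : ℝ) / m !) (m ! / k !) ≤ 2 / m :=
    calc _ ≤ ∑ k ∈ s with k < m, (k ! : ℝ) / m ! := sum_le_sum fun _ _ ↦ min_le_left _ _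
      _ ≤ ∑ k ∈ range m, (k ! : ℝ) / m ! :=
          sum_le_sum_of_subset_of_nonneg (fun k hk ↦ mem_range.mpr (mem_filter.mp hk).2)
            fun _ _ _ ↦ by positivity
      _ ≤ 2 / m := sum_range_factorial_div_le hm
  have hgt : ∑ k ∈ s with ¬k < m, min ((k ! : ℝ) / m !) (m ! / k !) ≤ 1 / m := by
    refine (sum_le_sum fun _ _ ↦ min_le_right _ _).trans
      (sum_factorial_div_le_of_lt (by omega) _ ?_)
    intro k hk
    obtain ⟨hks, hkm⟩ := mem_filter.mp hk
    exact lt_of_le_of_ne (not_lt.mp hkm) fun h ↦ hs (h ▸ hks)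
  calc _ ≤ 2 / (m : ℝ) + 1 / m := add_le_add hlt hgt
    _ = 3 / m := by ring

theorem summable_one_div_factorial_add_two :
    Summable fun n : ℕ ↦ 1 / ((n + 2)! : ℝ) := by
  have h : Summable fun n : ℕ ↦ 1 / (n ! : ℝ) := by simpa using Real.summable_pow_div_factorial 1
  exact (summable_nat_add_iff (f := fun n : ℕ ↦ 1 / (n ! : ℝ)) 2).mpr h

theorem tendsto_one_div_factorial : Tendsto (fun m : ℕ ↦ 1 / (m ! : ℝ)) atTop (𝓝 0) := by
  simpa only [one_div, Function.comp_def] using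
    tendsto_inv_atTop_zero.comp (tendsto_natCast_atTop_atTop.comp factorial_tendsto_atTop)

theorem tendsto_one_sub_one_div_factorial_mul (e : ℂ) :
    Tendsto (fun m : ℕ ↦ 1 - (1 / (m ! : ℂ)) * e) atTop (𝓝 1) := by
  have h : Tendsto (fun m : ℕ ↦ (1 / (m ! : ℂ))) atTop (𝓝 0) :=
    tendsto_zero_iff_norm_tendsto_zero.mpr (by simpa using tendsto_one_div_factorial)
  simpa using (h.mul_const e).const_sub 1

theorem norm_factorialBlaschke_le_one {z : ℂ} (hz : ‖z‖ ≤ 1) : ‖factorialBlaschke z‖ ≤ 1 := by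
  refine norm_tprod_le_one fun n ↦ norm_blaschkeFactor_le_one ?_ hz
  have h0 : 0 < 1 / ((n + 2)! : ℝ) := by positivity
  have h1 : 1 / ((n + 2)! : ℝ) ≤ 1 :=
    div_le_one_of_le₀ (by exact_mod_cast (n + 2).factorial_pos) (by positivity)
  rw [norm_real, Real.norm_eq_abs, abs_le]
  constructor <;> linarith

theorem one_div_factorial_add_two_le_half (n : ℕ) : 1 / ((n + 2)! : ℝ) ≤ 1 / 2 :=
  one_div_le_one_div_of_le two_pos <| by
    exact_mod_cast (Nat.self_le_factorial 2).trans (Nat.factorial_le (by omega))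

theorem sum_min_factorial_add_two_div_le {m : ℕ} (hm : 2 ≤ m) (s : Finset ℕ) (hs : m - 2 ∉ s) :
    ∑ n ∈ s, min (((n + 2)! : ℝ) / m !) (m ! / (n + 2)!) ≤ 3 / m := by
  have h := sum_min_factorial_div_le hm (s.map (addRightEmbedding 2)) (by
    simp only [Finset.mem_map, addRightEmbedding_apply, not_exists, not_and]
    exact fun n hn h ↦ hs ((by omega : n = m - 2) ▸ hn))
  rwa [sum_map] at h

theorem multipliable_blaschkeFactor_one_sub {w : ℂ} (hw : ‖1 - w‖ ≤ 1) (him : w.im ≠ 0) :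
    Multipliable fun n : ℕ ↦ blaschkeFactor ((1 - 1 / ((n + 2)! : ℝ) : ℝ) : ℂ) (1 - w) := by
  have hsum : Summable fun n : ℕ ↦
      ‖blaschkeFactor ((1 - 1 / ((n + 2)! : ℝ) : ℝ) : ℂ) (1 - w) - 1‖ :=
    Summable.of_nonneg_of_le (fun _ ↦ norm_nonneg _)
      (fun n ↦ norm_blaschkeFactor_one_sub_sub_one_le (by positivity)
        (one_div_factorial_add_two_le_half n) hw him)
      ((summable_one_div_factorial_add_two.mul_left 4).div_const _)
  simpa using multipliable_one_add_of_summable hsum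

theorem norm_sub_one_div_four_le_norm_factorialBlaschke {e : ℂ} (he : ‖e‖ = 1)
    (him : e.im ≠ 0) {m : ℕ} (hm : 2 ≤ m) (hre : 1 / (m ! : ℝ) ≤ 2 * e.re)
    (hmim : 96 ≤ e.im ^ 2 * m) :
    ‖e - 1‖ / 4 ≤ ‖factorialBlaschke (1 - (1 / m ! : ℂ) * e)‖ := by
  set δ : ℝ := 1 / (m ! : ℝ)
  have hδ0 : 0 < δ := by positivity
  have hδ1 : δ ≤ 1 := div_le_one_of_le₀ (by exact_mod_cast m.factorial_pos) (by positivity)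
  have hδw : (1 / m ! : ℂ) * e = (δ : ℂ) * e := by simp [δ]
  rw [hδw]
  set w : ℂ := δ * e
  have hw : ‖1 - w‖ ≤ 1 := norm_one_sub_ofReal_mul_le_one he hδ0.le hre
  have hnw : ‖w‖ = δ := by simp [w, he, hδ0.le]
  have hwim : w.im = δ * e.im := by simp [w]
  have hwim0 : w.im ≠ 0 := by rw [hwim]; exact mul_ne_zero hδ0.ne' him
  -- The factor of index `m - 2` is the one whose zero `1 - 1/m!` is as close to `1` as `z` is.
  have hspec : ‖e - 1‖ / 2 ≤
      ‖blaschkeFactor ((1 - 1 / ((m - 2 + 2)! : ℝ) : ℝ) : ℂ) (1 - w)‖ := by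
    rw [Nat.sub_add_cancel hm]
    exact norm_sub_one_div_two_le_norm_blaschkeFactor hδ0 hδ1 he.le
  have hK : 16 * ‖w‖ ^ 2 / w.im ^ 2 = 16 / e.im ^ 2 := by
    rw [hnw, hwim]
    field_simp
  have hratio : ∀ n : ℕ, min (‖w‖ / (1 / ((n + 2)! : ℝ))) (1 / ((n + 2)! : ℝ) / ‖w‖) =
      min (((n + 2)! : ℝ) / m !) (m ! / (n + 2)!) :=
    fun n ↦ by simp only [hnw, δ, div_div_div_cancel_left' _ _ one_ne_zero]
  have key := norm_mul_one_sub_le_norm_tprod (multipliable_blaschkeFactor_one_sub hw hwim0)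
    (j := m - 2) (v := fun n ↦ 16 / e.im ^ 2 * min (((n + 2)! : ℝ) / m !) (m ! / (n + 2)!))
    (S := 48 / (e.im ^ 2 * m)) (fun _ _ ↦ by positivity)
    (fun n _ ↦ by
      rw [← hK, ← hratio]
      linarith [one_sub_norm_blaschkeFactor_one_sub_le_min (by positivity)
        (one_div_factorial_add_two_le_half n) hw hwim0])
    (fun s hs ↦ by
      rw [← mul_sum]
      calc 16 / e.im ^ 2 * _ ≤ 16 / e.im ^ 2 * (3 / m) := by
            gcongr
            exact sum_min_factorial_add_two_div_le hm s hs
        _ = 48 / (e.im ^ 2 * m) := by field_simp; ring)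
  have hS : 48 / (e.im ^ 2 * m) ≤ 1 / 2 := by
    rw [div_le_div_iff₀ (by positivity) two_pos]
    linarith
  calc ‖e - 1‖ / 4 = ‖e - 1‖ / 2 * (1 / 2) := by ring
    _ ≤ _ := mul_le_mul hspec (by linarith) (by norm_num) (norm_nonneg _)
    _ ≤ _ := key

theorem eventually_norm_factorialBlaschke_mem_Icc {e : ℂ} (he : ‖e‖ = 1) (hre : 0 < e.re)
    (him : e.im ≠ 0) :
    ∀ᶠ m : ℕ in atTop, ‖factorialBlaschke (1 - (1 / m ! : ℂ) * e)‖ ∈ Set.Icc (‖e - 1‖ / 4) 1 := by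
  filter_upwards [eventually_ge_atTop 2,
    tendsto_one_div_factorial.eventually (eventually_le_nhds (by positivity : 0 < 2 * e.re)),
    tendsto_natCast_atTop_atTop.eventually_ge_atTop (96 / e.im ^ 2)] with m hm hmre hmim
  have hz : ‖1 - (1 / (m ! : ℂ)) * e‖ ≤ 1 := by
    simpa using norm_one_sub_ofReal_mul_le_one he (by positivity) hmre
  refine ⟨norm_sub_one_div_four_le_norm_factorialBlaschke he him hm hmre ?_,
    norm_factorialBlaschke_le_one hz⟩
  rwa [div_le_iff₀' (by positivity)] at hmim

theorem liminf_mul_pos {α : Type*} {l : Filter α} [l.NeBot] {p q : α → ℝ} {c : ℝ} (hc : 0 < c)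
    (hp : Tendsto p l (𝓝 1)) (hq : ∀ᶠ x in l, q x ∈ Set.Icc c 1) :
    0 < liminf (fun x ↦ p x * q x) l := by
  have hpq : ∀ᶠ x in l, c / 2 ≤ p x * q x ∧ p x * q x ≤ 2 := by
    filter_upwards [hq, hp.eventually (eventually_ge_nhds one_half_lt_one),
      hp.eventually (eventually_le_nhds one_lt_two)] with x ⟨hlo, hhi⟩ hp1 hp2
    constructor <;> nlinarith
  calc 0 < c / 2 := by positivity
    _ ≤ _ := le_liminf_of_le (isCoboundedUnder_ge_of_eventually_le l (hpq.mono fun _ h ↦ h.2))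
      (hpq.mono fun _ h ↦ h.1)

theorem stmt7_general (a : ℂ) (ha : a ∈ ball (0 : ℂ) 1)
    (θ₁ : ℝ) (h1 : 0 < |θ₁|) (h2 : |θ₁| < Real.pi / 2) :
    0 < Filter.liminf (fun m : ℕ =>
      ‖B a (1 - (1 / (Nat.factorial m : ℂ)) * Complex.exp (Complex.I * θ₁))‖)
      atTop := by
  set e := Complex.exp (Complex.I * θ₁)
  have heθ : e = exp (θ₁ * I) := by rw [mul_comm]
  have he : ‖e‖ = 1 := by rw [heθ, norm_exp_ofReal_mul_I]
  have hre : 0 < e.re := by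
    rw [heθ, exp_ofReal_mul_I_re]
    exact Real.cos_pos_of_mem_Ioo ⟨by linarith [neg_abs_le θ₁], by linarith [le_abs_self θ₁]⟩
  have him : e.im ≠ 0 := by
    rw [heθ, exp_ofReal_mul_I_im, Ne, Real.sin_eq_zero_iff_of_lt_of_lt
      (by linarith [neg_abs_le θ₁, Real.pi_pos]) (by linarith [le_abs_self θ₁, Real.pi_pos])]
    exact abs_pos.mp h1
  have he1 : 0 < ‖e - 1‖ := norm_pos_iff.mpr fun h ↦ him (by rw [sub_eq_zero.mp h, one_im])
  have ha1 : a ≠ 1 := by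
    rintro rfl
    simp at ha
  simp_rw [B_eq_blaschkeFactor_mul_factorialBlaschke, norm_mul]
  exact liminf_mul_pos (by positivity)
    ((tendsto_norm_blaschkeFactor_nhds_one ha1).comp (tendsto_one_sub_one_div_factorial_mul e))
    (eventually_norm_factorialBlaschke_mem_Icc he hre him)

/-- For `a ∈ 𝔻 \ ℝ` and `0 < |θ₁| < π/2`,
`liminf_{m→∞} |B(1 - (1/m!) e^{iθ₁})| > 0`. -/
theorem stmt7 (a : ℂ) (ha : a ∈ ball (0 : ℂ) 1)
    (haR : a ∉ Set.range ((↑) : ℝ → ℂ))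
    (θ₁ : ℝ) (h1 : 0 < |θ₁|) (h2 : |θ₁| < Real.pi / 2) :
    0 < Filter.liminf (fun m : ℕ =>
      ‖B a (1 - (1 / (Nat.factorial m : ℂ)) * Complex.exp (Complex.I * θ₁))‖)
      atTop :=
  stmt7_general a ha θ₁ h1 h2
end

section
/- Let a ∈ 𝔻 lie in the open second quadrant, i.e. Re a < 0 and Im a > 0. Then the Möbius factor φ_a(t) = (a - t)/(1 - conj(a)·t) is nonzero for every t ∈ [0,1], and there exists a continuous strictly increasing function θ : [0,1] → ℝ such that φ_a(t) = |φ_a(t)|·e^{iθ(t)} for all t ∈ [0,1]. -/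
/-!
For real `t` we have `φ_a(t) = w(t) / |1 - ā t|²` with `w(t) = (a - t)(1 - a t)`, so `φ_a(t)` and
`w(t)` have the same argument, and `Im w(t) = Im a · (1 - 2 Re a · t + t²) > 0`. On the upper
half-plane `arg = π/2 - arctan (Re/Im)`, so `arg z < arg z'` once `Im (z̄ z') > 0`, and
`Im (conj (w s) · w t) = Im a · (1 - |a|²) · (t - s) · (1 - s t)`, which is positive for
`-1 ≤ s < t ≤ 1`. Hence `θ = arg ∘ w` is continuous and strictly increasing.
-/

open Complex
open scoped ComplexConjugate Real

theorem Complex.arg_eq_pi_div_two_sub_arctan {z : ℂ} (hz : 0 < z.im) :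
    arg z = π / 2 - Real.arctan (z.re / z.im) := by
  have hz0 : z ≠ 0 := fun h => hz.ne' (by simp [h])
  have hpos : 0 < arg z := by
    refine (arg_nonneg_iff.2 hz.le).lt_of_ne fun h => ?_
    have hsin := sin_arg z
    rw [← h, Real.sin_zero] at hsin
    exact hz.ne' (by simpa [hz0] using hsin.symm)
  have hlt : arg z < π := arg_lt_pi_iff.2 (Or.inr hz.ne')
  have hcot : Real.tan (π / 2 - arg z) = z.re / z.im := by
    rw [Real.tan_pi_div_two_sub, Real.tan_eq_sin_div_cos, sin_arg, cos_arg hz0]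
    have : ‖z‖ ≠ 0 := norm_ne_zero_iff.2 hz0
    field_simp
  rw [← hcot, Real.arctan_tan (by linarith) (by linarith)]
  ring

theorem Complex.arg_lt_arg_of_im_pos {z w : ℂ} (hz : 0 < z.im) (hw : 0 < w.im)
    (h : 0 < (conj z * w).im) : arg z < arg w := by
  rw [arg_eq_pi_div_two_sub_arctan hz, arg_eq_pi_div_two_sub_arctan hw, sub_lt_sub_iff_left]
  apply Real.arctan_strictMono
  rw [div_lt_div_iff₀ hw hz]
  simp only [mul_im, conj_re, conj_im] at h
  linarith

theorem one_sub_conj_mul_ne_zero {a z : ℂ} (ha : ‖a‖ < 1) (hz : ‖z‖ ≤ 1) :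
    1 - conj a * z ≠ 0 := by
  refine sub_ne_zero.2 fun h => ?_
  have : ‖conj a * z‖ < 1 := by
    rw [norm_mul, RCLike.norm_conj]
    exact mul_lt_one_of_nonneg_of_lt_one_left (norm_nonneg a) ha hz
  rw [← h, norm_one] at this
  exact this.false

def mobiusNumerator (a : ℂ) (t : ℝ) : ℂ := (a - t) * (1 - a * t)

theorem div_one_sub_conj_mul_eq_mobiusNumerator_mul (a : ℂ) (t : ℝ) :
    (a - t) / (1 - conj a * t) = mobiusNumerator a t * ((normSq (1 - conj a * t))⁻¹ : ℝ) := by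
  rw [div_eq_mul_inv, inv_def, mobiusNumerator, ofReal_inv]
  simp [mul_assoc]

theorem mobiusNumerator_im (a : ℂ) (t : ℝ) :
    (mobiusNumerator a t).im = a.im * (1 - 2 * a.re * t + t ^ 2) := by
  simp only [mobiusNumerator, mul_im, mul_re, sub_re, sub_im, ofReal_re, ofReal_im, one_re,
    one_im]
  ring

theorem mobiusNumerator_im_pos {a : ℂ} (ha : ‖a‖ < 1) (him : 0 < a.im) (t : ℝ) :
    0 < (mobiusNumerator a t).im := by
  have hre : |a.re| < 1 := (abs_re_le_norm a).trans_lt ha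
  rw [mobiusNumerator_im]
  refine mul_pos him ?_
  nlinarith [sq_nonneg (t - a.re), abs_lt.1 hre]

theorem conj_mobiusNumerator_mul_im (a : ℂ) (s t : ℝ) :
    (conj (mobiusNumerator a s) * mobiusNumerator a t).im =
      a.im * (1 - normSq a) * (t - s) * (1 - s * t) := by
  simp only [mobiusNumerator, normSq_apply, mul_im, mul_re, conj_re, conj_im, sub_re, sub_im,
    ofReal_re, ofReal_im, one_re, one_im]
  ring

theorem continuous_arg_mobiusNumerator {a : ℂ} (ha : ‖a‖ < 1) (him : 0 < a.im) :
    Continuous fun t => arg (mobiusNumerator a t) :=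
  continuous_iff_continuousAt.2 fun t =>
    (continuousAt_arg (mem_slitPlane_iff.2 (Or.inr (mobiusNumerator_im_pos ha him t).ne'))).comp
      (by unfold mobiusNumerator; fun_prop)

theorem strictMonoOn_arg_mobiusNumerator {a : ℂ} (ha : ‖a‖ < 1) (him : 0 < a.im) :
    StrictMonoOn (fun t => arg (mobiusNumerator a t)) (Set.Icc (-1) 1) := by
  intro s hs t ht hst
  refine arg_lt_arg_of_im_pos (mobiusNumerator_im_pos ha him s)
    (mobiusNumerator_im_pos ha him t) ?_
  have hna : 0 < 1 - normSq a := by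
    rw [normSq_eq_norm_sq]
    nlinarith [norm_nonneg a]
  have hst' : 0 < 1 - s * t := by nlinarith [hs.1, hs.2, ht.1, ht.2]
  rw [conj_mobiusNumerator_mul_im]
  have hts : 0 < t - s := sub_pos.2 hst
  positivity

theorem stmt10_general (a : ℂ) (ha : ‖a‖ < 1) (him : 0 < a.im) :
    (∀ t : ℝ, t ∈ Set.Icc (0 : ℝ) 1 → (a - t) / (1 - (starRingEnd ℂ) a * t) ≠ 0) ∧
    ∃ θ : ℝ → ℝ, ContinuousOn θ (Set.Icc 0 1) ∧ StrictMonoOn θ (Set.Icc 0 1) ∧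
      ∀ t : ℝ, t ∈ Set.Icc (0 : ℝ) 1 →
        (a - t) / (1 - (starRingEnd ℂ) a * t) =
          (‖(a - t) / (1 - (starRingEnd ℂ) a * t)‖ : ℂ) *
            Complex.exp (Complex.I * θ t) := by
  have hden : ∀ t ∈ Set.Icc (0 : ℝ) 1, 1 - conj a * t ≠ 0 := fun t ht =>
    one_sub_conj_mul_ne_zero ha (by simpa [abs_of_nonneg ht.1] using ht.2)
  have harg : ∀ t ∈ Set.Icc (0 : ℝ) 1,
      arg ((a - t) / (1 - conj a * t)) = arg (mobiusNumerator a t) := fun t ht => by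
    rw [div_one_sub_conj_mul_eq_mobiusNumerator_mul,
      arg_mul_real (inv_pos.2 (normSq_pos.2 (hden t ht)))]
  refine ⟨fun t ht => div_ne_zero (fun h => him.ne' (by simpa using congrArg im h)) (hden t ht),
    fun t => arg (mobiusNumerator a t), (continuous_arg_mobiusNumerator ha him).continuousOn,
    (strictMonoOn_arg_mobiusNumerator ha him).mono (Set.Icc_subset_Icc (by norm_num) le_rfl),
    fun t ht => ?_⟩
  beta_reduce
  rw [← harg t ht, mul_comm I, norm_mul_exp_arg_mul_I]

/-- If `a ∈ 𝔻` lies in the open second quadrant (`Re a < 0`, `Im a > 0`), then the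
Möbius factor `φ_a(t) = (a - t)/(1 - conj a · t)` is nonzero on `[0,1]` and its
argument can be chosen as a continuous strictly increasing function `θ : [0,1] → ℝ`
with `φ_a(t) = |φ_a(t)| e^{iθ(t)}`. -/
theorem stmt10 (a : ℂ) (ha : ‖a‖ < 1) (hre : a.re < 0) (him : 0 < a.im) :
    (∀ t : ℝ, t ∈ Set.Icc (0 : ℝ) 1 → (a - t) / (1 - (starRingEnd ℂ) a * t) ≠ 0) ∧
    ∃ θ : ℝ → ℝ, ContinuousOn θ (Set.Icc 0 1) ∧ StrictMonoOn θ (Set.Icc 0 1) ∧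
      ∀ t : ℝ, t ∈ Set.Icc (0 : ℝ) 1 →
        (a - t) / (1 - (starRingEnd ℂ) a * t) =
          (‖(a - t) / (1 - (starRingEnd ℂ) a * t)‖ : ℂ) *
            Complex.exp (Complex.I * θ t) :=
  stmt10_general a ha him
end

section
/- Let a₁, …, a_k be finitely many points of 𝔻, each lying in the open second quadrant (Re a_j < 0 and Im a_j > 0), and set B₁(t) = ∏_{j=1}^k (a_j - t)/(1 - conj(a_j)·t). Then B₁ has no zeros on [0,1], and there exists a continuous strictly increasing function θ : [0,1] → ℝ such that B₁(t) = |B₁(t)|·e^{iθ(t)} for all t ∈ [0,1]. -/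
/-!
For real `t`, the hypothesis `Im a > 0` keeps both `a - t` and `1 - conj a * t` off the closed
negative real axis, so `arg (a - t) - arg (1 - conj a * t)` is a differentiable branch of the
argument of the Blaschke factor. Its derivative is `Im a * (1 / |a - t|² - 1 / |1 - conj a * t|²)`,
which is positive for `|t| < 1` because `|1 - conj a * z|² - |a - z|² = (1 - |a|²)(1 - |z|²)`.
Summing over the factors gives the continuous, strictly increasing argument `θ` of the product.
-/

open Complex ComplexConjugate

theorem HasDerivAt.arg_real {f : ℝ → ℂ} {f' : ℂ} {x : ℝ} (hf : HasDerivAt f f' x)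
    (hx : f x ∈ slitPlane) : HasDerivAt (fun t => arg (f t)) (f' / f x).im x := by
  have h := imCLM.hasFDerivAt.comp_hasDerivAt x (hf.clog_real hx)
  simp only [Function.comp_def, imCLM_apply, log_im] at h
  exact h

namespace Complex

theorem div_eq_norm_mul_exp_arg_sub (z w : ℂ) :
    z / w = ‖z / w‖ * exp (I * (arg z - arg w)) := by
  conv_lhs => rw [← norm_mul_exp_arg_mul_I z, ← norm_mul_exp_arg_mul_I w]
  rw [norm_div, ofReal_div, mul_sub, exp_sub, mul_div_mul_comm, mul_comm I, mul_comm I]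

theorem prod_div_eq_norm_mul_exp_sum_arg_sub {ι : Type*} (s : Finset ι) (z w : ι → ℂ) :
    ∏ i ∈ s, z i / w i =
      ‖∏ i ∈ s, z i / w i‖ * exp (I * ↑(∑ i ∈ s, (arg (z i) - arg (w i)))) := by
  conv_lhs => rw [Finset.prod_congr rfl fun i _ => div_eq_norm_mul_exp_arg_sub (z i) (w i)]
  rw [Finset.prod_mul_distrib, ← exp_sum, ← Finset.mul_sum, norm_prod, ofReal_prod, ofReal_sum]
  simp only [ofReal_sub]

theorem normSq_one_sub_conj_mul_sub_normSq_sub (a z : ℂ) :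
    normSq (1 - conj a * z) - normSq (a - z) = (1 - normSq a) * (1 - normSq z) := by
  simp only [normSq_apply, sub_re, sub_im, mul_re, mul_im, one_re, one_im, conj_re, conj_im]
  ring

theorem normSq_sub_lt_normSq_one_sub_conj_mul {a z : ℂ} (ha : ‖a‖ < 1) (hz : ‖z‖ < 1) :
    normSq (a - z) < normSq (1 - conj a * z) := by
  have key := normSq_one_sub_conj_mul_sub_normSq_sub a z
  rw [normSq_eq_norm_sq a, normSq_eq_norm_sq z] at key
  have : 0 < (1 - ‖a‖ ^ 2) * (1 - ‖z‖ ^ 2) := by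
    apply mul_pos <;> nlinarith [norm_nonneg a, norm_nonneg z]
  linarith

section BlaschkeFactor

variable {a : ℂ}

theorem sub_ofReal_mem_slitPlane (ha : a.im ≠ 0) (t : ℝ) : a - t ∈ slitPlane :=
  mem_slitPlane_iff.2 (Or.inr (by simpa using ha))

theorem one_sub_conj_mul_ofReal_mem_slitPlane (ha : a.im ≠ 0) (t : ℝ) :
    1 - conj a * t ∈ slitPlane := by
  rcases eq_or_ne t 0 with rfl | ht
  · simp
  · exact mem_slitPlane_iff.2 (Or.inr (by simpa using ⟨ha, ht⟩))

theorem hasDerivAt_arg_blaschkeFactor (ha : a.im ≠ 0) (t : ℝ) :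
    HasDerivAt (fun s : ℝ => arg (a - s) - arg (1 - conj a * s))
      (a.im / normSq (a - t) - a.im / normSq (1 - conj a * t)) t := by
  have hnum : HasDerivAt (fun s : ℝ => a - s) (-1) t := by
    simpa using (hasDerivAt_id t).ofReal_comp.const_sub a
  have hden : HasDerivAt (fun s : ℝ => 1 - conj a * s) (-conj a) t := by
    simpa using ((hasDerivAt_id t).ofReal_comp.const_mul (conj a)).const_sub 1
  refine ((hnum.arg_real (sub_ofReal_mem_slitPlane ha t)).fun_sub
    (hden.arg_real (one_sub_conj_mul_ofReal_mem_slitPlane ha t))).congr_deriv ?_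
  congr 1
  · simp [neg_div]
  · simp [div_im]
    ring

theorem arg_blaschkeFactor_deriv_pos (ha_im : 0 < a.im) (ha : ‖a‖ < 1) {t : ℝ} (ht : |t| < 1) :
    0 < a.im / normSq (a - t) - a.im / normSq (1 - conj a * t) := by
  have hlt := normSq_sub_lt_normSq_one_sub_conj_mul (z := t) ha (by simpa using ht)
  have hpos : 0 < normSq (a - t) :=
    normSq_pos.2 (slitPlane_ne_zero (sub_ofReal_mem_slitPlane ha_im.ne' t))
  exact sub_pos.2 (div_lt_div_of_pos_left ha_im hpos hlt)

end BlaschkeFactor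

end Complex

theorem stmt11_general (k : ℕ) (hk : 0 < k) (a : Fin k → ℂ) (ha : ∀ j, ‖a j‖ < 1)
    (him : ∀ j, 0 < (a j).im) :
    (∀ t : ℝ, t ∈ Set.Icc (0 : ℝ) 1 →
      (∏ j : Fin k, (a j - t) / (1 - (starRingEnd ℂ) (a j) * t)) ≠ 0) ∧
    ∃ θ : ℝ → ℝ, ContinuousOn θ (Set.Icc 0 1) ∧ StrictMonoOn θ (Set.Icc 0 1) ∧
      ∀ t : ℝ, t ∈ Set.Icc (0 : ℝ) 1 →
        (∏ j : Fin k, (a j - t) / (1 - (starRingEnd ℂ) (a j) * t)) =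
          ((‖∏ j : Fin k, (a j - t) / (1 - (starRingEnd ℂ) (a j) * t)‖ : ℝ) : ℂ) *
            Complex.exp (Complex.I * θ t) := by
  set θ : ℝ → ℝ := fun t => ∑ j, (arg (a j - t) - arg (1 - conj (a j) * t))
  have hθ (t : ℝ) : HasDerivAt θ (∑ j, ((a j).im / normSq (a j - t)
      - (a j).im / normSq (1 - conj (a j) * t))) t :=
    HasDerivAt.fun_sum fun j _ => hasDerivAt_arg_blaschkeFactor (him j).ne' t
  have hcont : Continuous θ := continuous_iff_continuousAt.2 fun t => (hθ t).continuousAt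
  have hmono : StrictMonoOn θ (Set.Icc 0 1) := by
    refine strictMonoOn_of_deriv_pos (convex_Icc 0 1) hcont.continuousOn fun t ht => ?_
    rw [interior_Icc] at ht
    have : Nonempty (Fin k) := ⟨⟨0, hk⟩⟩
    rw [(hθ t).deriv]
    exact Finset.sum_pos (fun j _ => arg_blaschkeFactor_deriv_pos (him j) (ha j)
      (abs_lt.2 ⟨by linarith [ht.1], ht.2⟩)) Finset.univ_nonempty
  refine ⟨fun t _ => Finset.prod_ne_zero_iff.2 fun j _ => div_ne_zero ?_ ?_, θ, hcont.continuousOn,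
    hmono, fun t _ => prod_div_eq_norm_mul_exp_sum_arg_sub _ _ _⟩
  · exact slitPlane_ne_zero (sub_ofReal_mem_slitPlane (him j).ne' t)
  · exact slitPlane_ne_zero (one_sub_conj_mul_ofReal_mem_slitPlane (him j).ne' t)

/-- If `a₁, …, a_k ∈ 𝔻` all lie in the open second quadrant, then the finite Blaschke
product `B₁(t) = ∏_{j=1}^k (a_j - t)/(1 - conj a_j · t)` has no zeros on `[0,1]` and
its argument can be chosen as a continuous strictly increasing function
`θ : [0,1] → ℝ` with `B₁(t) = |B₁(t)| e^{iθ(t)}`. -/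
theorem stmt11 (k : ℕ) (hk : 0 < k) (a : Fin k → ℂ) (ha : ∀ j, ‖a j‖ < 1)
    (hre : ∀ j, (a j).re < 0) (him : ∀ j, 0 < (a j).im) :
    (∀ t : ℝ, t ∈ Set.Icc (0 : ℝ) 1 →
      (∏ j : Fin k, (a j - t) / (1 - (starRingEnd ℂ) (a j) * t)) ≠ 0) ∧
    ∃ θ : ℝ → ℝ, ContinuousOn θ (Set.Icc 0 1) ∧ StrictMonoOn θ (Set.Icc 0 1) ∧
      ∀ t : ℝ, t ∈ Set.Icc (0 : ℝ) 1 →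
        (∏ j : Fin k, (a j - t) / (1 - (starRingEnd ℂ) (a j) * t)) =
          ((‖∏ j : Fin k, (a j - t) / (1 - (starRingEnd ℂ) (a j) * t)‖ : ℝ) : ℂ) *
            Complex.exp (Complex.I * θ t) :=
  stmt11_general k hk a ha him
end

section
/- Let a ∈ 𝔻 with a ∉ ℝ, let x_n = 1 - 1/n! for n ≥ 2, and let B(z) = ((a - z)/(1 - conj(a)·z)) · ∏_{n=2}^∞ (x_n - z)/(1 - x_n·z) for z ∈ 𝔻. Then for every complex number w ≠ 0, the set {t ∈ [0,1) : B(t) = w} is finite; that is, the restriction of B to [0,1) attains each nonzero value only finitely many times. -/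
open Complex Filter Metric

open ComplexConjugate Polynomial

theorem Complex.ofReal_tprod {ι : Type*} (f : ι → ℝ) :
    ((∏' i, f i : ℝ) : ℂ) = ∏' i, (f i : ℂ) :=
  Function.LeftInverse.map_tprod (g := ofRealHom) f continuous_ofReal continuous_re ofReal_re

theorem exists_B_ofReal_eq_mul_ofReal (a : ℂ) (t : ℝ) :
    ∃ r : ℝ, B a t = (a - t) / (1 - conj a * t) * r := by
  refine ⟨∏' n : ℕ, (1 - 1 / (n + 2).factorial - t) / (1 - (1 - 1 / (n + 2).factorial) * t), ?_⟩
  rw [B, ofReal_tprod]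
  push_cast
  rfl

namespace Complex

noncomputable def imQuadratic (a w : ℂ) : ℝ[X] :=
  C (w * conj a).im * X ^ 2 - C (w * (1 + conj a ^ 2)).im * X + C (w * conj a).im

theorem eval_imQuadratic (a w : ℂ) (t : ℝ) :
    (imQuadratic a w).eval t = (w * (1 - conj a * t) * (conj a - t)).im := by
  have hexpand : w * (1 - conj a * t) * (conj a - t)
      = ((t ^ 2 : ℝ) : ℂ) * (w * conj a) - t * (w * (1 + conj a ^ 2)) + w * conj a := by
    push_cast; ring
  simp only [imQuadratic, hexpand, eval_add, eval_sub, eval_mul, eval_C, eval_pow, eval_X,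
    add_im, sub_im, im_ofReal_mul]
  ring

theorem imQuadratic_ne_zero {a w : ℂ} (hw : w ≠ 0) (ha : a.im ≠ 0) (ha1 : normSq a ≠ 1) :
    imQuadratic a w ≠ 0 := by
  intro h
  have hcoeff (n : ℕ) := congrArg (coeff · n) h
  simp only [imQuadratic, coeff_add, coeff_sub, coeff_C_mul, coeff_X_pow, coeff_X, coeff_C,
    coeff_zero] at hcoeff
  have hc : (w * conj a).im = 0 := by simpa using hcoeff 0
  have hd : (w * (1 + conj a ^ 2)).im = 0 := neg_eq_zero.1 (by simpa using hcoeff 1)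
  simp only [mul_im, mul_re, add_re, add_im, one_re, one_im, pow_two, conj_re, conj_im] at hc hd
  have hwim : w.im = 0 := by
    have : w.im * (1 - normSq a) = 0 := by rw [normSq_apply]; linear_combination hd - 2 * a.re * hc
    exact (mul_eq_zero.1 this).resolve_right (sub_ne_zero.2 ha1.symm)
  have hwre : w.re = 0 := by
    have : w.re * a.im = 0 := by linear_combination a.re * hwim - hc
    exact (mul_eq_zero.1 this).resolve_right ha
  exact hw (ext hwre hwim)

theorem isRoot_imQuadratic {a w : ℂ} {t r : ℝ} (h : (a - t) * r = w * (1 - conj a * t)) :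
    (imQuadratic a w).IsRoot t := by
  have hreal : w * (1 - conj a * t) * (conj a - t) = ((r * normSq (a - t) : ℝ) : ℂ) := by
    rw [← h, ofReal_mul, ← mul_conj, map_sub, conj_ofReal]
    ring
  rw [IsRoot, eval_imQuadratic, hreal, ofReal_im]

end Complex

theorem finite_setOf_B_ofReal_eq {a w : ℂ} (hw : w ≠ 0) (ha : a.im ≠ 0)
    (ha1 : normSq a ≠ 1) : {t : ℝ | B a t = w}.Finite := by
  refine (finite_setOfPred_isRoot (imQuadratic_ne_zero hw ha ha1)).subset fun t hBt ↦ ?_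
  obtain ⟨r, hr⟩ := exists_B_ofReal_eq_mul_ofReal a t
  rw [Set.mem_ofPred_eq, hr] at hBt
  have hd : 1 - conj a * t ≠ 0 := fun hd ↦ hw <| by rw [← hBt, hd, div_zero, zero_mul]
  rw [div_mul_eq_mul_div, div_eq_iff hd] at hBt
  exact isRoot_imQuadratic hBt

/-- For `a ∈ 𝔻 \ ℝ`, the restriction of `B` to `[0,1)` attains each nonzero value
only finitely many times. -/
theorem stmt12 (a : ℂ) (ha : a ∈ ball (0 : ℂ) 1)
    (haR : a ∉ Set.range ((↑) : ℝ → ℂ))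
    (w : ℂ) (hw : w ≠ 0) :
    {t : ℝ | t ∈ Set.Ico (0 : ℝ) 1 ∧ B a (t : ℂ) = w}.Finite := by
  have haim : a.im ≠ 0 := fun h ↦ haR ⟨a.re, ext rfl h.symm⟩
  have ha1 : normSq a < 1 := by
    rw [normSq_eq_norm_sq, sq_lt_one_iff_abs_lt_one, abs_norm]
    simpa using ha
  exact (finite_setOf_B_ofReal_eq hw haim ha1.ne).subset fun _ ht ↦ ht.2
end

section
/- There exists a holomorphic function φ : 𝔻 → ℂ with φ(𝔻) = 𝔻 whose zero set Z(φ) = {z ∈ 𝔻 : φ(z) = 0} is nonempty and finite, and such that for every λ ∈ 𝔻 the fiber {z ∈ 𝔻 : φ(z) = φ(λ)} is finite if and only if λ ∈ Z(φ) (equivalently, if and only if φ(λ) = 0). -/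
/-!
Take φ(z) = z · exp((z + 1)/(z - 1)); its only zero in 𝔻 is 0. The Cayley map
u ↦ (u + 1)/(u - 1) is an involution carrying the left half-plane onto 𝔻, and turns
φ(z) = w into (u + 1)/(u - 1) · eᵘ = w. For 0 < |w| < 1 and c = log w + 2πik with k large,
u ↦ c + log((u - 1)/(u + 1)) is a contraction of a small closed disk about c inside the left
half-plane, and its fixed point solves this equation. These solutions are unbounded in k, so
every nonzero fiber of φ is infinite (and in particular nonempty, giving φ(𝔻) = 𝔻).
-/

open Complex Metric Set

noncomputable def cayley (z : ℂ) : ℂ := (z + 1) / (z - 1)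

lemma cayley_cayley {u : ℂ} (hu : u ≠ 1) : cayley (cayley u) = u := by
  have hu' : u - 1 ≠ 0 := sub_ne_zero.mpr hu
  unfold cayley
  rw [div_add_one hu', div_sub_one hu', div_div_div_cancel_right₀ hu']
  field_simp
  ring

lemma re_cayley_neg {z : ℂ} (hz : ‖z‖ < 1) : (cayley z).re < 0 := by
  have hz1 : z ≠ 1 := by rintro rfl; simp at hz
  have hnormSq : normSq z < 1 := by
    rw [← Complex.sq_norm]; nlinarith [norm_nonneg z]
  have hnum : (z + 1).re * (z - 1).re + (z + 1).im * (z - 1).im = normSq z - 1 := by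
    simp only [add_re, sub_re, one_re, add_im, sub_im, one_im, normSq_apply]; ring
  rw [cayley, div_re, ← add_div, hnum]
  exact div_neg_of_neg_of_pos (by linarith) (normSq_pos.mpr (sub_ne_zero.mpr hz1))

lemma norm_cayley_lt_one {u : ℂ} (hu : u.re < 0) : ‖cayley u‖ < 1 := by
  have hsq : ‖u + 1‖ ^ 2 < ‖u - 1‖ ^ 2 := by
    simp only [Complex.sq_norm, normSq_apply, add_re, sub_re, one_re, add_im, sub_im, one_im]
    nlinarith
  have hlt : ‖u + 1‖ < ‖u - 1‖ := lt_of_pow_lt_pow_left₀ 2 (norm_nonneg _) hsq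
  rw [cayley, norm_div, div_lt_one ((norm_nonneg _).trans_lt hlt)]
  exact hlt

lemma injOn_cayley : InjOn cayley {u | u.re < 0} := by
  have hne : ∀ u : ℂ, u.re < 0 → u ≠ 1 := by rintro u hu rfl; norm_num at hu
  intro u hu v hv huv
  rw [← cayley_cayley (hne u hu), ← cayley_cayley (hne v hv), huv]

noncomputable def idMulExpCayley (z : ℂ) : ℂ := z * exp (cayley z)

lemma idMulExpCayley_cayley {u : ℂ} (hu : u ≠ 1) :
    idMulExpCayley (cayley u) = cayley u * exp u := by
  rw [idMulExpCayley, cayley_cayley hu]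

lemma idMulExpCayley_eq_zero_iff {z : ℂ} : idMulExpCayley z = 0 ↔ z = 0 := by
  simp [idMulExpCayley, exp_ne_zero]

lemma norm_idMulExpCayley_lt_one {z : ℂ} (hz : ‖z‖ < 1) : ‖idMulExpCayley z‖ < 1 := by
  have hexp : ‖exp (cayley z)‖ < 1 := by
    rw [norm_exp]; exact Real.exp_lt_one_iff.mpr (re_cayley_neg hz)
  rw [idMulExpCayley, norm_mul]
  nlinarith [norm_nonneg z, norm_nonneg (exp (cayley z))]

lemma differentiableOn_idMulExpCayley : DifferentiableOn ℂ idMulExpCayley (ball 0 1) := by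
  intro z hz
  have hz1 : z - 1 ≠ 0 := by
    rintro h; rw [sub_eq_zero.mp h, mem_ball_zero_iff] at hz; simp at hz
  have : DifferentiableAt ℂ cayley z := by unfold cayley; fun_prop (disch := exact hz1)
  exact (differentiableAt_id.mul this.cexp).differentiableWithinAt

lemma sub_one_div_add_one_eq {u : ℂ} (hu : u + 1 ≠ 0) :
    (u - 1) / (u + 1) = 1 + -2 / (u + 1) := by
  field_simp; ring

lemma norm_neg_two_div_add_one_le_half {u : ℂ} (hu : 4 ≤ ‖u + 1‖) :
    ‖(-2 : ℂ) / (u + 1)‖ ≤ 1 / 2 := by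
  rw [norm_div, div_le_iff₀ (by linarith)]; norm_num; linarith

lemma norm_log_sub_one_div_add_one_le {u : ℂ} (hu : 4 ≤ ‖u + 1‖) :
    ‖log ((u - 1) / (u + 1))‖ ≤ 3 / ‖u + 1‖ := by
  have hu0 : u + 1 ≠ 0 := norm_pos_iff.mp (by linarith)
  rw [sub_one_div_add_one_eq hu0]
  calc ‖log (1 + -2 / (u + 1))‖ ≤ 3 / 2 * ‖(-2 : ℂ) / (u + 1)‖ :=
        norm_log_one_add_half_le_self (norm_neg_two_div_add_one_le_half hu)
    _ = 3 / ‖u + 1‖ := by simp; ring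

lemma hasDerivAt_log_sub_one_div_add_one {u : ℂ} (hu : 4 ≤ ‖u + 1‖) :
    HasDerivAt (fun u ↦ log ((u - 1) / (u + 1))) (2 / ((u - 1) * (u + 1))) u := by
  have hu0 : u + 1 ≠ 0 := norm_pos_iff.mp (by linarith)
  have hu1 : u - 1 ≠ 0 := by
    intro h
    rw [show u + 1 = 2 by linear_combination h] at hu
    norm_num at hu
  have hslit : (u - 1) / (u + 1) ∈ slitPlane := by
    rw [sub_one_div_add_one_eq hu0]
    exact mem_slitPlane_of_norm_lt_one
      ((norm_neg_two_div_add_one_le_half hu).trans_lt (by norm_num))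
  have hquot : HasDerivAt (fun u ↦ (u - 1) / (u + 1)) (2 / (u + 1) ^ 2) u := by
    have h := (hasDerivAt_id' (x := u) |>.sub_const 1).fun_div
      (hasDerivAt_id' (x := u) |>.add_const 1) hu0
    rwa [show (1 * (u + 1) - (u - 1) * 1) / (u + 1) ^ 2 = 2 / (u + 1) ^ 2 by ring] at h
  convert hquot.clog hslit using 1
  field_simp

lemma exists_cayley_mul_exp_eq_exp (c : ℂ) {r : ℝ} (hr0 : 0 < r) (hr1 : r ≤ 1)
    (hc : 4 / r + 2 ≤ ‖c‖) : ∃ u ∈ closedBall c r, cayley u * exp u = exp c := by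
  set T : ℂ → ℂ := fun u ↦ c + log ((u - 1) / (u + 1))
  have hfar : ∀ u ∈ closedBall c r, ∀ a : ℂ, ‖a‖ = 1 → 4 / r ≤ ‖u + a‖ := by
    intro u hu a ha
    rw [mem_closedBall, dist_eq_norm] at hu
    have : ‖c‖ ≤ ‖u + a‖ + ‖u - c‖ + ‖a‖ := by
      calc ‖c‖ = ‖(u + a) - (u - c) - a‖ := by congr 1; ring
        _ ≤ ‖(u + a) - (u - c)‖ + ‖a‖ := norm_sub_le _ _
        _ ≤ ‖u + a‖ + ‖u - c‖ + ‖a‖ := by gcongr; exact norm_sub_le _ _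
    linarith
  have h4 : 4 ≤ 4 / r := by rw [le_div_iff₀ hr0]; linarith
  have hplus : ∀ u ∈ closedBall c r, 4 / r ≤ ‖u + 1‖ := fun u hu ↦ hfar u hu 1 (by simp)
  have hminus : ∀ u ∈ closedBall c r, 4 / r ≤ ‖u - 1‖ := fun u hu ↦ by
    simpa [← sub_eq_add_neg] using hfar u hu (-1) (by simp)
  have hmaps : MapsTo T (closedBall c r) (closedBall c r) := by
    intro u hu
    rw [mem_closedBall, dist_eq_norm, add_sub_cancel_left]
    calc ‖log ((u - 1) / (u + 1))‖ ≤ 3 / ‖u + 1‖ :=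
          norm_log_sub_one_div_add_one_le (h4.trans (hplus u hu))
      _ ≤ 3 / (4 / r) := by gcongr; exact hplus u hu
      _ ≤ r := by rw [div_div_eq_mul_div]; linarith
  have hderiv : ∀ u ∈ closedBall c r,
      HasDerivWithinAt T (2 / ((u - 1) * (u + 1))) (closedBall c r) u := fun u hu ↦
    ((hasDerivAt_log_sub_one_div_add_one (h4.trans (hplus u hu))).const_add c).hasDerivWithinAt
  have hbound : ∀ u ∈ closedBall c r, ‖2 / ((u - 1) * (u + 1))‖₊ ≤ 1 / 2 := by
    intro u hu
    have h1 := h4.trans (hplus u hu)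
    have h2 := h4.trans (hminus u hu)
    rw [← NNReal.coe_le_coe, coe_nnnorm, norm_div, norm_mul, div_le_iff₀ (by positivity)]
    norm_num
    nlinarith
  have hcontr : ContractingWith (1 / 2) (hmaps.restrict T _ _) :=
    ⟨by rw [← NNReal.coe_lt_coe]; norm_num,
      ((convex_closedBall c r).lipschitzOnWith_of_nnnorm_hasDerivWithin_le hderiv
        hbound).mapsToRestrict hmaps⟩
  obtain ⟨u, hu, hfix, -⟩ := hcontr.exists_fixedPoint' isClosed_closedBall.isComplete hmaps
    (mem_closedBall_self hr0.le) (edist_ne_top _ _)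
  have hu1 : u - 1 ≠ 0 := norm_pos_iff.mp (by linarith [hminus u hu])
  have hu2 : u + 1 ≠ 0 := norm_pos_iff.mp (by linarith [hplus u hu])
  have hexp : exp u = exp c * ((u - 1) / (u + 1)) := by
    conv_lhs => rw [← hfix.eq]
    rw [exp_add, exp_log (div_ne_zero hu1 hu2)]
  refine ⟨u, hu, ?_⟩
  rw [hexp, cayley]
  field_simp

lemma exists_re_neg_cayley_mul_exp_eq_le_norm {w : ℂ} (hw0 : w ≠ 0) (hw1 : ‖w‖ < 1) (R : ℝ) :
    ∃ u : ℂ, u.re < 0 ∧ cayley u * exp u = w ∧ R ≤ ‖u‖ := by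
  have hlog : Real.log ‖w‖ < 0 := Real.log_neg (norm_pos_iff.mpr hw0) hw1
  -- `Re c = log ‖w‖` for the centres `c` below, so `closedBall c r` lies in the left half-plane.
  set r := min 1 (-Real.log ‖w‖ / 2)
  have hr0 : 0 < r := lt_min one_pos (by linarith)
  obtain ⟨k, hk⟩ := exists_nat_ge (‖log w‖ + max (4 / r + 2) (R + 1))
  set c := log w + k * (2 * Real.pi * I)
  have hexp : exp c = w := by rw [exp_add, exp_log hw0, exp_nat_mul_two_pi_mul_I, mul_one]
  have hc : (k : ℝ) - ‖log w‖ ≤ ‖c‖ := by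
    have : ‖(k : ℂ) * (2 * Real.pi * I)‖ = 2 * Real.pi * k := by
      simp [abs_of_pos Real.pi_pos]; ring
    have := norm_sub_norm_le ((k : ℂ) * (2 * Real.pi * I)) (-log w)
    rw [sub_neg_eq_add, add_comm, norm_neg] at this
    nlinarith [Real.pi_gt_three, k.cast_nonneg (α := ℝ)]
  obtain ⟨u, hu, hu_eq⟩ := exists_cayley_mul_exp_eq_exp c hr0 (min_le_left _ _)
    (by linarith [le_max_left (4 / r + 2) (R + 1)])
  rw [mem_closedBall, dist_eq_norm] at hu
  refine ⟨u, ?_, hexp ▸ hu_eq, ?_⟩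
  · have hre : c.re = Real.log ‖w‖ := by simp [c, log_re]
    have := (abs_le.mp ((abs_re_le_norm (u - c)).trans hu)).2
    rw [sub_re, hre] at this
    linarith [min_le_right 1 (-Real.log ‖w‖ / 2)]
  · have := norm_sub_norm_le c u
    rw [norm_sub_rev] at this
    linarith [le_max_right (4 / r + 2) (R + 1), min_le_left 1 (-Real.log ‖w‖ / 2)]

lemma infinite_fiber_idMulExpCayley {w : ℂ} (hw0 : w ≠ 0) (hw1 : ‖w‖ < 1) :
    {z : ℂ | z ∈ ball 0 1 ∧ idMulExpCayley z = w}.Infinite := by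
  set S := {u : ℂ | u.re < 0 ∧ cayley u * exp u = w}
  have hS : S.Infinite := by
    intro hfin
    obtain ⟨C, hC⟩ := isBounded_iff_forall_norm_le.mp hfin.isBounded
    obtain ⟨u, hu_re, hu_eq, hu_norm⟩ := exists_re_neg_cayley_mul_exp_eq_le_norm hw0 hw1 (C + 1)
    linarith [hC u ⟨hu_re, hu_eq⟩]
  refine ((hS.image (injOn_cayley.mono fun u hu ↦ hu.1))).mono ?_
  rintro _ ⟨u, ⟨hu_re, hu_eq⟩, rfl⟩
  have hu1 : u ≠ 1 := by rintro rfl; norm_num at hu_re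
  exact ⟨mem_ball_zero_iff.mpr (norm_cayley_lt_one hu_re), by rw [idMulExpCayley_cayley hu1, hu_eq]⟩

/-- There exists a holomorphic function `φ` mapping the unit disk onto the unit disk
whose zero set `Z(φ)` is nonempty and finite, and such that for `λ ∈ 𝔻` the fiber
`{z ∈ 𝔻 : φ(z) = φ(λ)}` is finite exactly when `φ(λ) = 0`, i.e. when `λ ∈ Z(φ)`. -/
theorem stmt17 :
    ∃ φ : ℂ → ℂ, DifferentiableOn ℂ φ (ball (0 : ℂ) 1) ∧
      φ '' (ball (0 : ℂ) 1) = ball (0 : ℂ) 1 ∧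
      {z : ℂ | z ∈ ball (0 : ℂ) 1 ∧ φ z = 0}.Nonempty ∧
      {z : ℂ | z ∈ ball (0 : ℂ) 1 ∧ φ z = 0}.Finite ∧
      ∀ l ∈ ball (0 : ℂ) 1,
        ({z : ℂ | z ∈ ball (0 : ℂ) 1 ∧ φ z = φ l}.Finite ↔ φ l = 0) := by
  have hzero : {z : ℂ | z ∈ ball (0 : ℂ) 1 ∧ idMulExpCayley z = 0} = {0} := by
    ext z
    simp only [mem_ofPred_eq, mem_singleton_iff, idMulExpCayley_eq_zero_iff,
      and_iff_right_iff_imp]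
    rintro rfl
    exact mem_ball_self one_pos
  have hmaps : MapsTo idMulExpCayley (ball 0 1) (ball 0 1) := fun z hz ↦
    mem_ball_zero_iff.mpr (norm_idMulExpCayley_lt_one (mem_ball_zero_iff.mp hz))
  refine ⟨idMulExpCayley, differentiableOn_idMulExpCayley, ?_, hzero ▸ singleton_nonempty 0,
    hzero ▸ finite_singleton 0, fun l hl ↦ ⟨fun hfin ↦ ?_, fun hl0 ↦ ?_⟩⟩
  · refine (mapsTo_iff_image_subset.mp hmaps).antisymm fun w hw ↦ ?_
    by_cases hw0 : w = 0
    · exact ⟨0, mem_ball_self one_pos, by rw [hw0, idMulExpCayley_eq_zero_iff]⟩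
    · obtain ⟨z, hz, hzw⟩ := (infinite_fiber_idMulExpCayley hw0 (mem_ball_zero_iff.mp hw)).nonempty
      exact ⟨z, hz, hzw⟩
  · by_contra hl0
    exact infinite_fiber_idMulExpCayley hl0 (mem_ball_zero_iff.mp (hmaps hl)) hfin
  · rw [hl0, hzero]
    exact finite_singleton 0
end
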